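/- arXiv:2407.08927 — 5 statements merged into one kernel-verified Lean document; each statement's English description precedes it below -/
import Mathlib

section
/- Let n be a positive integer, let ε = 1/(4·17^6·48·192), and let G be a chordal graph on at least n − εn vertices with no clique of size εn. Then there exists Z ⊆ V(G) that is the union of at most 2 cliques, and pairwise disjoint, pairwise anticomplete sets X_1, X_2, X_3 ⊆ V(G) \ Z with |X_i| = ⌈n/17⌉ for each i. -/
/-!
Chordal graphs have balanced clique separators: every vertex set `A` contains a clique `K` such
that each component of `A \ K` has at most `|A| / 2` vertices. Take `K` minimising the largest
component; if a component `D` were bigger, chordality gives a vertex `d ∈ D` adjacent to all of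
`S = K ∩ N(D)`, and `S ∪ {d}` is a clique whose components are all smaller than `D`. Grouping the
components of `A \ K` greedily splits it into two anticomplete parts of size at least about
`|A| / 4`. Splitting `V` and then the larger part again gives two cliques and three pairwise
anticomplete sets of size about `|V| / 8 ≥ n / 17`, because cliques have fewer than `εn` vertices.
-/

open Finset

namespace SimpleGraph

variable {V : Type*} (G : SimpleGraph V)

def IsChordal : Prop :=
  ¬ ∃ (m : ℕ) (v : Fin (m + 4) → V), Function.Injective v ∧
    ∀ i j : Fin (m + 4), G.Adj (v i) (v j) ↔ (j = i + 1 ∨ i = j + 1)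

structure IsWalkOn (D : Set V) (p : ℕ → V) (k : ℕ) : Prop where
  mem : ∀ i ≤ k, p i ∈ D
  adj : ∀ i < k, G.Adj (p i) (p (i + 1))

structure IsShortestWalkOn (D X Y : Set V) (p : ℕ → V) (k : ℕ) : Prop where
  walk : G.IsWalkOn D p k
  head_mem : p 0 ∈ X
  last_mem : p k ∈ Y
  le : ∀ q l, G.IsWalkOn D q l → q 0 ∈ X → q l ∈ Y → k ≤ l

def ReachableIn (D : Set V) : V → V → Prop :=
  Relation.ReflTransGen fun x y => x ∈ D ∧ y ∈ D ∧ G.Adj x y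

open Classical in
noncomputable def componentIn (R : Finset V) (u : V) : Finset V := {v ∈ R | G.ReachableIn R u v}

/-- `C` is a union of components of `R`. -/
def IsClosedIn (R C : Finset V) : Prop := ∀ x ∈ C, ∀ y ∈ R, G.Adj x y → y ∈ C

variable {G} {D X Y : Set V} {p : ℕ → V} {k : ℕ}

namespace IsWalkOn

lemma of_le (h : G.IsWalkOn D p k) {l : ℕ} (hl : l ≤ k) : G.IsWalkOn D p l :=
  ⟨fun i hi => h.mem i (hi.trans hl), fun i hi => h.adj i (hi.trans_le hl)⟩

lemma shift (h : G.IsWalkOn D p k) {i : ℕ} (hi : i ≤ k) :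
    G.IsWalkOn D (fun m => p (m + i)) (k - i) :=
  ⟨fun m hm => h.mem _ (by omega),
    fun m hm => by simpa [Nat.add_right_comm] using h.adj (m + i) (by omega)⟩

lemma shortcut (h : G.IsWalkOn D p k) {i j : ℕ} (hij : i < j) (hj : j ≤ k)
    (hadj : G.Adj (p i) (p j)) :
    G.IsWalkOn D (fun m => if m ≤ i then p m else p (m + (j - i - 1))) (k - (j - i - 1)) := by
  refine ⟨fun m hm => ?_, fun m hm => ?_⟩
  · split_ifs <;> exact h.mem _ (by omega)
  · rcases lt_trichotomy m i with hmi | rfl | hmi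
    · simpa [hmi.le, Nat.succ_le_of_lt hmi] using h.adj m (by omega)
    · simpa [show m + 1 + (j - m - 1) = j by omega] using hadj
    · simpa [show ¬ m ≤ i by omega, show ¬ m + 1 ≤ i by omega, Nat.add_right_comm]
        using h.adj (m + (j - i - 1)) (by omega)

lemma exists_isShortestWalkOn (h : G.IsWalkOn D p k) (h0 : p 0 ∈ X) (hk : p k ∈ Y) :
    ∃ q l, G.IsShortestWalkOn D X Y q l := by
  classical
  have hex : ∃ l q, G.IsWalkOn D q l ∧ q 0 ∈ X ∧ q l ∈ Y := ⟨k, p, h, h0, hk⟩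
  obtain ⟨q, hq, hq0, hql⟩ := Nat.find_spec hex
  exact ⟨q, _, hq, hq0, hql, fun r l hr hr0 hrl => Nat.find_min' hex ⟨r, hr, hr0, hrl⟩⟩

end IsWalkOn

lemma ReachableIn.symm {x y : V} (h : G.ReachableIn D x y) : G.ReachableIn D y x :=
  haveI : Std.Symm fun x y => x ∈ D ∧ y ∈ D ∧ G.Adj x y := ⟨fun _ _ ⟨hx, hy, h⟩ => ⟨hy, hx, h.symm⟩⟩
  Relation.ReflTransGen.stdSymm.symm _ _ h

lemma ReachableIn.exists_isWalkOn {u v : V} (h : G.ReachableIn D u v) (hu : u ∈ D) :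
    ∃ p k, G.IsWalkOn D p k ∧ p 0 = u ∧ p k = v := by
  induction h with
  | refl => exact ⟨fun _ => u, 0, ⟨fun _ _ => hu, fun _ h => absurd h (by omega)⟩, rfl, rfl⟩
  | @tail b c _ hbc ih =>
    obtain ⟨p, k, hp, rfl, rfl⟩ := ih
    refine ⟨fun m => if m ≤ k then p m else c, k + 1, ⟨fun i hi => ?_, fun i hi => ?_⟩,
      by simp, by simp⟩
    · split_ifs
      · exact hp.mem i ‹_›
      · exact hbc.2.1
    · rcases (by omega : i < k ∨ i = k) with hik | rfl
      · simpa [hik.le, Nat.succ_le_of_lt hik] using hp.adj i hik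
      · simpa using hbc.2.2

namespace IsShortestWalkOn

variable (h : G.IsShortestWalkOn D X Y p k)
include h

lemma notMem_left {i : ℕ} (hi0 : 0 < i) (hik : i ≤ k) : p i ∉ X := fun hX => by
  have := h.le _ _ (h.walk.shift hik) (by simpa using hX)
    (by simpa [Nat.sub_add_cancel hik] using h.last_mem)
  omega

lemma notMem_right {i : ℕ} (hik : i < k) : p i ∉ Y := fun hY => by
  have := h.le _ _ (h.walk.of_le hik.le) h.head_mem hY
  omega

lemma not_adj_of_lt {i j : ℕ} (hij : i + 1 < j) (hj : j ≤ k) : ¬ G.Adj (p i) (p j) := fun hadj => by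
  have := h.le _ _ (h.walk.shortcut (by omega) hj hadj) (by simpa using h.head_mem)
    (by simpa [show ¬ k - (j - i - 1) ≤ i by omega, show k - (j - i - 1) + (j - i - 1) = k by omega]
      using h.last_mem)
  omega

lemma adj_iff {i j : ℕ} (hi : i ≤ k) (hj : j ≤ k) :
    G.Adj (p i) (p j) ↔ j = i + 1 ∨ i = j + 1 := by
  refine ⟨fun hadj => ?_, ?_⟩
  · rcases lt_trichotomy i j with hij | rfl | hij
    · exact .inl (by by_contra; exact h.not_adj_of_lt (by omega) hj hadj)
    · exact absurd hadj G.irrefl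
    · exact .inr (by by_contra; exact h.not_adj_of_lt (by omega) hi hadj.symm)
  · rintro (rfl | rfl)
    · exact h.walk.adj i (by omega)
    · exact (h.walk.adj j (by omega)).symm

lemma ne_of_lt {i j : ℕ} (hij : i < j) (hj : j ≤ k) : p i ≠ p j := fun heq => by
  rcases hj.eq_or_lt with rfl | hjk
  · exact h.notMem_right hij (heq ▸ h.last_mem)
  · exact h.not_adj_of_lt (j := j + 1) (by omega) hjk (heq ▸ h.walk.adj j hjk)

end IsShortestWalkOn

lemma _root_.Fin.eq_add_one_iff_val {n : ℕ} (i j : Fin (n + 1)) :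
    j = i + 1 ↔ ((j : ℕ) = i + 1 ∨ ((i : ℕ) = n ∧ (j : ℕ) = 0)) := by
  rw [Fin.ext_iff, Fin.val_add_one]
  split_ifs with h <;> simp [Fin.ext_iff] at h <;> omega

namespace IsChordal

variable (hG : G.IsChordal)
include hG

theorem false_of_induced_cycle {c : ℕ → V} {L : ℕ} (hL : 3 ≤ L)
    (hinj : ∀ i j, i < j → j ≤ L → c i ≠ c j)
    (hadj : ∀ i j, i < j → j ≤ L → (G.Adj (c i) (c j) ↔ j = i + 1 ∨ (i = 0 ∧ j = L))) :
    False := by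
  obtain ⟨m, rfl⟩ : ∃ m, L = m + 3 := ⟨L - 3, by omega⟩
  refine hG ⟨m, fun i => c i, fun i j hij => Fin.ext ?_, fun i j => ?_⟩
  · by_contra hne
    rcases Nat.lt_or_gt_of_ne hne with h | h
    · exact hinj _ _ h (by omega) hij
    · exact hinj _ _ h (by omega) hij.symm
  · rw [Fin.eq_add_one_iff_val, Fin.eq_add_one_iff_val]
    rcases lt_trichotomy (i : ℕ) j with h | h | h
    · rw [hadj _ _ h (by omega)]; omega
    · simp only [Fin.ext h, G.irrefl, false_iff]; omega
    · rw [G.adj_comm, hadj _ _ h (by omega)]; omega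

theorem exists_common_neighbor {s t : V} (hst : G.Adj s t) (hs : s ∉ D) (ht : t ∉ D)
    (hp : G.IsWalkOn D p k) (h0 : G.Adj t (p 0)) (hk : G.Adj s (p k)) :
    ∃ x ∈ D, G.Adj t x ∧ G.Adj s x := by
  obtain ⟨q, l, hq⟩ :=
    hp.exists_isShortestWalkOn (X := {x | G.Adj t x}) (Y := {y | G.Adj s y}) h0 hk
  by_contra! hno
  have hl : 0 < l := Nat.pos_of_ne_zero fun hl0 =>
    hno _ (hq.walk.mem 0 (by omega)) hq.head_mem (hl0 ▸ hq.last_mem)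
  have hne : ∀ x, ∀ i ≤ l, x ∉ D → x ≠ q i := fun x i hi hx h => hx (h ▸ hq.walk.mem i hi)
  have htq : ∀ i ≤ l, G.Adj t (q i) ↔ i = 0 := fun i hi =>
    ⟨fun h => by by_contra h0; exact hq.notMem_left (Nat.pos_of_ne_zero h0) hi h,
      by rintro rfl; exact hq.head_mem⟩
  have hsq : ∀ i ≤ l, G.Adj s (q i) ↔ i = l := fun i hi =>
    ⟨fun h => by by_contra hl; exact hq.notMem_right (by omega) h,
      by rintro rfl; exact hq.last_mem⟩
  -- the induced cycle `t, q 0, …, q l, s`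
  refine hG.false_of_induced_cycle
    (c := fun m => if m = 0 then t else if m ≤ l + 1 then q (m - 1) else s) (L := l + 2) (by omega)
    (fun i j hij hj => ?_) (fun i j hij hj => ?_) <;>
  obtain rfl | hi := Nat.eq_zero_or_pos i <;>
  obtain hj' | rfl := (by omega : j ≤ l + 1 ∨ j = l + 2) <;>
  simp (disch := omega) only [if_pos, if_neg, ↓reduceIte]
  · exact hne t _ (by omega) ht
  · exact hst.ne.symm
  · exact hq.ne_of_lt (by omega) (by omega)
  · exact (hne s _ (by omega) hs).symm
  · rw [htq _ (by omega)]; omega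
  · exact iff_of_true hst.symm (by simp)
  · rw [hq.adj_iff (by omega) (by omega)]; omega
  · rw [G.adj_comm, hsq _ (by omega)]; omega

/- Take `d ∈ D` with the most neighbours in `S`. If some `s ∈ S` misses `d`, a shortest walk from
the vertices dominating `S ∩ N(d)` to `N(s)` ends at a vertex missing some `t ∈ S ∩ N(d)`, and
`s`, `t` then have no common neighbour on that walk. -/
theorem exists_forall_adj_of_isClique {S D : Finset V} (hS : G.IsClique (S : Set V))
    (hSD : Disjoint S D) (hD : ∀ x ∈ D, ∀ y ∈ D, G.ReachableIn D x y)
    (hdom : ∀ s ∈ S, ∃ x ∈ D, G.Adj s x) (hne : D.Nonempty) : ∃ d ∈ D, ∀ s ∈ S, G.Adj s d := by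
  classical
  obtain ⟨d, hd, hmax⟩ := D.exists_max_image (fun x => #{s ∈ S | G.Adj s x}) hne
  by_contra! hno
  obtain ⟨s, hs, hsd⟩ := hno d hd
  obtain ⟨b, hb, hsb⟩ := hdom s hs
  obtain ⟨p, k, hp, rfl, rfl⟩ := (hD _ hd _ hb).exists_isWalkOn hd
  obtain ⟨q, l, hq⟩ := hp.exists_isShortestWalkOn
    (X := {x | ∀ t ∈ S, G.Adj t (p 0) → G.Adj t x}) (Y := {y | G.Adj s y}) (fun _ _ h => h) hsb
  obtain ⟨t, ht, htp, htq⟩ : ∃ t ∈ S, G.Adj t (p 0) ∧ ¬ G.Adj t (q l) := by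
    by_contra! hall
    have hsub : insert s {t ∈ S | G.Adj t (p 0)} ⊆ {t ∈ S | G.Adj t (q l)} := by
      intro x hx
      rcases mem_insert.mp hx with rfl | hx
      · exact mem_filter.mpr ⟨hs, hq.last_mem⟩
      · obtain ⟨hxS, hxp⟩ := mem_filter.mp hx
        exact mem_filter.mpr ⟨hxS, hall x hxS hxp⟩
    have := card_le_card hsub
    rw [card_insert_of_notMem (by simp [hsd])] at this
    have := hmax (q l) (hq.walk.mem l le_rfl)
    omega
  have hst : G.Adj s t := hS hs ht (by rintro rfl; exact hsd htp)
  have hout : ∀ x ∈ S, x ∉ {y | ∃ i ≤ l, q i = y} := by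
    rintro x hx ⟨i, hi, rfl⟩
    exact Finset.disjoint_left.mp hSD hx (hq.walk.mem i hi)
  obtain ⟨_, ⟨i, hi, rfl⟩, hti, hsi⟩ := hG.exists_common_neighbor hst (hout s hs) (hout t ht)
    ⟨fun i hi => ⟨i, hi, rfl⟩, hq.walk.adj⟩ (hq.head_mem t ht htp) hq.last_mem
  obtain rfl : i = l := by by_contra hil; exact hq.notMem_right (by omega) hsi
  exact htq hti

end IsChordal

section Components

variable {R C : Finset V} {u : V}

lemma mem_componentIn {v : V} : v ∈ G.componentIn R u ↔ v ∈ R ∧ G.ReachableIn R u v := by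
  simp [componentIn]

lemma componentIn_subset : G.componentIn R u ⊆ R := fun _ hv => (mem_componentIn.mp hv).1

lemma self_mem_componentIn (hu : u ∈ R) : u ∈ G.componentIn R u :=
  mem_componentIn.mpr ⟨hu, .refl⟩

lemma isClosedIn_componentIn : G.IsClosedIn R (G.componentIn R u) := fun x hx y hy hxy => by
  obtain ⟨hxR, hux⟩ := mem_componentIn.mp hx
  exact mem_componentIn.mpr ⟨hy, hux.tail ⟨hxR, hy, hxy⟩⟩

lemma IsClosedIn.mem_of_reachableIn (hC : G.IsClosedIn R C) {x y : V} (hx : x ∈ C)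
    (h : G.ReachableIn R x y) : y ∈ C := by
  induction h with
  | refl => exact hx
  | tail _ hbc ih => exact hC _ ih _ hbc.2.1 hbc.2.2

lemma IsClosedIn.componentIn_subset (hC : G.IsClosedIn R C) (hu : u ∈ C) :
    G.componentIn R u ⊆ C := fun _ hv => hC.mem_of_reachableIn hu (mem_componentIn.mp hv).2

lemma IsClosedIn.disjoint_componentIn (hC : G.IsClosedIn R C) (hu : u ∉ C) :
    Disjoint (G.componentIn R u) C :=
  Finset.disjoint_left.mpr fun _ hv hvC =>
    hu (hC.mem_of_reachableIn hvC (mem_componentIn.mp hv).2.symm)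

lemma IsClosedIn.union {C' : Finset V} [DecidableEq V] (hC : G.IsClosedIn R C)
    (hC' : G.IsClosedIn R C') : G.IsClosedIn R (C ∪ C') := fun x hx y hy hxy => by
  rcases mem_union.mp hx with hx | hx
  · exact mem_union_left _ (hC x hx y hy hxy)
  · exact mem_union_right _ (hC' x hx y hy hxy)

lemma reachableIn_componentIn {x y : V} (hx : x ∈ G.componentIn R u)
    (hy : y ∈ G.componentIn R u) : G.ReachableIn (G.componentIn R u) x y := by
  have hxy : G.ReachableIn R x y :=
    (mem_componentIn.mp hx).2.symm.trans (mem_componentIn.mp hy).2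
  induction hxy with
  | refl => exact .refl
  | @tail b c hxb hbc ih =>
    have hb := isClosedIn_componentIn.mem_of_reachableIn hx hxb
    exact (ih hb).tail ⟨hb, hy, hbc.2.2⟩

variable [DecidableEq V]

theorem IsChordal.exists_isClique_forall_card_componentIn_lt (hG : G.IsChordal) {A K : Finset V}
    (hKA : K ⊆ A) (hK : G.IsClique (K : Set V)) (hu : u ∈ A \ K)
    (hbig : #A < 2 * #(G.componentIn (A \ K) u)) :
    ∃ K' ⊆ A, G.IsClique (K' : Set V) ∧
      ∀ w ∈ A \ K', #(G.componentIn (A \ K') w) < #(G.componentIn (A \ K) u) := by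
  classical
  set D := G.componentIn (A \ K) u
  set S := {s ∈ K | ∃ x ∈ D, G.Adj s x}
  have hSK : S ⊆ K := filter_subset _ _
  have hDA : D ⊆ A := componentIn_subset.trans sdiff_subset
  obtain ⟨d, hdD, hdS⟩ := hG.exists_forall_adj_of_isClique (hK.subset (by simpa using hSK))
    (disjoint_of_subset_left hSK (disjoint_of_subset_right componentIn_subset disjoint_sdiff))
    (fun _ hx _ hy => reachableIn_componentIn hx hy) (fun _ hs => (mem_filter.mp hs).2)
    ⟨u, self_mem_componentIn hu⟩
  refine ⟨insert d S, insert_subset (hDA hdD) (hSK.trans hKA), ?_, fun w hw => ?_⟩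
  · rw [coe_insert]
    exact (hK.subset (by simpa using hSK)).insert fun s hs _ => (hdS s hs).symm
  -- `K ∩ N(D) ⊆ S`, so a neighbour of `D` outside the new clique lies in `A \ K`, hence in `D`
  have hnext : ∀ x ∈ D, ∀ y ∈ A \ insert d S, G.Adj x y → y ∈ D := by
    intro x hx y hy hxy
    refine isClosedIn_componentIn x hx y (mem_sdiff.mpr ⟨(mem_sdiff.mp hy).1, fun hyK => ?_⟩) hxy
    exact (mem_sdiff.mp hy).2 (mem_insert_of_mem (mem_filter.mpr ⟨hyK, x, hx, hxy.symm⟩))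
  by_cases hwD : w ∈ D
  · have hC : G.IsClosedIn (A \ insert d S) (D.erase d) := fun x hx y hy hxy =>
      mem_erase.mpr ⟨fun h => (mem_sdiff.mp hy).2 (h ▸ mem_insert_self d S),
        hnext x (mem_of_mem_erase hx) y hy hxy⟩
    calc #(G.componentIn (A \ insert d S) w) ≤ #(D.erase d) :=
          card_le_card (hC.componentIn_subset (mem_erase.mpr ⟨fun h => (mem_sdiff.mp hw).2
            (h ▸ mem_insert_self d S), hwD⟩))
      _ < #D := card_erase_lt_of_mem hdD
  · have hC : G.IsClosedIn (A \ insert d S) ((A \ insert d S) \ D) := fun x hx y hy hxy =>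
      mem_sdiff.mpr ⟨hy, fun hyD =>
        (mem_sdiff.mp hx).2 (hnext y hyD x (mem_sdiff.mp hx).1 hxy.symm)⟩
    have hDbig : #A - #D < #D := by omega
    calc #(G.componentIn (A \ insert d S) w) ≤ #((A \ insert d S) \ D) :=
          card_le_card (hC.componentIn_subset (mem_sdiff.mpr ⟨hw, hwD⟩))
      _ ≤ #(A \ D) := card_le_card (sdiff_subset_sdiff sdiff_subset le_rfl)
      _ < #D := by rwa [card_sdiff_of_subset hDA]

theorem IsChordal.exists_balanced_isClique_separator (hG : G.IsChordal) (A : Finset V) :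
    ∃ K ⊆ A, G.IsClique (K : Set V) ∧ ∀ u ∈ A \ K, 2 * #(G.componentIn (A \ K) u) ≤ #A := by
  suffices h : ∀ m, ∀ K ⊆ A, G.IsClique (K : Set V) →
      (∀ u ∈ A \ K, #(G.componentIn (A \ K) u) ≤ m) →
      ∃ K ⊆ A, G.IsClique (K : Set V) ∧ ∀ u ∈ A \ K, 2 * #(G.componentIn (A \ K) u) ≤ #A from
    h #A ∅ (empty_subset _) (by simp) fun _ _ =>
      card_le_card (componentIn_subset.trans sdiff_subset)
  intro m
  induction m with
  | zero => exact fun K hKA hK hm => ⟨K, hKA, hK, fun u hu => by have := hm u hu; omega⟩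
  | succ m ih =>
    intro K hKA hK hm
    by_cases hgood : ∀ u ∈ A \ K, 2 * #(G.componentIn (A \ K) u) ≤ #A
    · exact ⟨K, hKA, hK, hgood⟩
    push Not at hgood
    obtain ⟨u, hu, hbig⟩ := hgood
    obtain ⟨K', hK'A, hK', hlt⟩ := hG.exists_isClique_forall_card_componentIn_lt hKA hK hu hbig
    exact ih K' hK'A hK' fun w hw => by have := hlt w hw; have := hm u hu; omega

theorem exists_isClosedIn_card_balanced {R : Finset V} (N : ℕ)
    (hR : ∀ u ∈ R, 2 * #(G.componentIn R u) ≤ N) :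
    ∃ C ⊆ R, G.IsClosedIn R C ∧ 2 * #R ≤ 4 * #C + N ∧ 4 * #C ≤ 2 * #R + N := by
  classical
  obtain ⟨C, hC, hmax⟩ := exists_max_image {C ∈ R.powerset | G.IsClosedIn R C ∧ 4 * #C ≤ 2 * #R + N}
    card ⟨∅, mem_filter.mpr ⟨empty_mem_powerset R, fun _ h => absurd h (notMem_empty _), by simp⟩⟩
  simp only [mem_filter, mem_powerset] at hC hmax
  obtain ⟨hCR, hCcl, hCle⟩ := hC
  refine ⟨C, hCR, hCcl, ?_, hCle⟩
  by_contra! hlt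
  obtain ⟨u, huR, huC⟩ : ∃ u ∈ R, u ∉ C :=
    not_subset.mp fun hRC => by have := card_le_card hRC; omega
  have hdisj := hCcl.disjoint_componentIn huC
  have hu : 0 < #(G.componentIn R u) := card_pos.mpr ⟨u, self_mem_componentIn huR⟩
  have hcard := card_union_of_disjoint hdisj.symm
  have := hR u huR
  have := hmax (C ∪ G.componentIn R u) ⟨union_subset hCR componentIn_subset,
    hCcl.union isClosedIn_componentIn, by omega⟩
  omega

theorem IsChordal.exists_isClique_anticomplete_split (hG : G.IsChordal) (A : Finset V) :
    ∃ K A₁ A₂ : Finset V, K ⊆ A ∧ G.IsClique (K : Set V) ∧ A₁ ∪ A₂ ⊆ A \ K ∧ Disjoint A₁ A₂ ∧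
      (∀ x ∈ A₁, ∀ y ∈ A₂, ¬ G.Adj x y) ∧ #A ≤ 4 * #A₁ + 2 * #K ∧ #A ≤ 2 * #A₂ + #K := by
  obtain ⟨K, hKA, hK, hcomp⟩ := hG.exists_balanced_isClique_separator A
  obtain ⟨C, hCR, hC, hlow, hhigh⟩ := exists_isClosedIn_card_balanced #A hcomp
  have hCA := card_le_card hCR
  have hKA' := card_le_card hKA
  rw [card_sdiff_of_subset hKA] at hCA hlow hhigh
  have hcard : #C + #((A \ K) \ C) + #K = #A := by
    rw [card_sdiff_of_subset hCR, card_sdiff_of_subset hKA]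
    omega
  have hanti : ∀ x ∈ C, ∀ y ∈ (A \ K) \ C, ¬ G.Adj x y := fun x hx y hy hxy =>
    (mem_sdiff.mp hy).2 (hC x hx y (mem_sdiff.mp hy).1 hxy)
  rcases le_total #C #((A \ K) \ C) with hle | hle
  · exact ⟨K, C, _, hKA, hK, union_subset hCR sdiff_subset, disjoint_sdiff, hanti,
      by omega, by omega⟩
  · exact ⟨K, _, C, hKA, hK, union_subset sdiff_subset hCR, sdiff_disjoint,
      fun x hx y hy hxy => hanti y hy x hx hxy.symm, by omega, by omega⟩

end Components

theorem IsChordal.exists_isClique_anticomplete_triple [Fintype V] (hG : G.IsChordal) (t κ : ℕ)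
    (hκ : ∀ K : Finset V, G.IsClique (K : Set V) → #K ≤ κ) (ht : 8 * t + 6 * κ ≤ Fintype.card V) :
    ∃ K₁ K₂ X₁ X₂ X₃ : Finset V, G.IsClique (K₁ : Set V) ∧ G.IsClique (K₂ : Set V) ∧
      (∀ x ∈ X₁, x ∉ (K₁ ∪ K₂ : Set V)) ∧ (∀ x ∈ X₂, x ∉ (K₁ ∪ K₂ : Set V)) ∧
      (∀ x ∈ X₃, x ∉ (K₁ ∪ K₂ : Set V)) ∧
      Disjoint X₁ X₂ ∧ Disjoint X₁ X₃ ∧ Disjoint X₂ X₃ ∧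
      (∀ u ∈ X₁, ∀ v ∈ X₂, ¬ G.Adj u v) ∧ (∀ u ∈ X₁, ∀ v ∈ X₃, ¬ G.Adj u v) ∧
      (∀ u ∈ X₂, ∀ v ∈ X₃, ¬ G.Adj u v) ∧ #X₁ = t ∧ #X₂ = t ∧ #X₃ = t := by
  classical
  obtain ⟨K₁, P, B, -, hK₁, hPB, hPBd, hPBa, hP, hB⟩ := hG.exists_isClique_anticomplete_split univ
  obtain ⟨K₂, B₁, B₂, hK₂B, hK₂, hB₁₂, hB₁₂d, hB₁₂a, hB₁, hB₂⟩ :=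
    hG.exists_isClique_anticomplete_split B
  have := hκ K₁ hK₁
  have := hκ K₂ hK₂
  rw [card_univ] at hP hB
  obtain ⟨X₁, hX₁, rfl⟩ := exists_subset_card_eq (show t ≤ #P by omega)
  obtain ⟨X₂, hX₂, h₂⟩ := exists_subset_card_eq (show #X₁ ≤ #B₁ by omega)
  obtain ⟨X₃, hX₃, h₃⟩ := exists_subset_card_eq (show #X₁ ≤ #B₂ by omega)
  have hPK : ∀ x ∈ P, x ∉ (K₁ ∪ K₂ : Set V) := fun x hx hxK => hxK.elim
    (mem_sdiff.mp (hPB (mem_union_left _ hx))).2 (Finset.disjoint_left.mp hPBd hx ∘ (hK₂B ·))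
  have hBK : ∀ x ∈ B₁ ∪ B₂, x ∈ B ∧ x ∉ (K₁ ∪ K₂ : Set V) := fun x hx => by
    obtain ⟨hxB, hxK₂⟩ := mem_sdiff.mp (hB₁₂ hx)
    refine ⟨hxB, fun hxK => hxK.elim ?_ hxK₂⟩
    exact (mem_sdiff.mp (hPB (mem_union_right _ hxB))).2
  have hX₂B := fun x hx => hBK x (mem_union_left _ (hX₂ hx))
  have hX₃B := fun x hx => hBK x (mem_union_right _ (hX₃ hx))
  refine ⟨K₁, K₂, X₁, X₂, X₃, hK₁, hK₂, fun x hx => hPK x (hX₁ hx), fun x hx => (hX₂B x hx).2,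
    fun x hx => (hX₃B x hx).2, disjoint_of_subset_left hX₁ ?_, disjoint_of_subset_left hX₁ ?_,
    disjoint_of_subset_left hX₂ (disjoint_of_subset_right hX₃ hB₁₂d),
    fun u hu v hv => hPBa u (hX₁ hu) v (hX₂B v hv).1,
    fun u hu v hv => hPBa u (hX₁ hu) v (hX₃B v hv).1,
    fun u hu v hv => hB₁₂a u (hX₂ hu) v (hX₃ hv), rfl, h₂, h₃⟩
  · exact Finset.disjoint_right.mpr fun x hx => Finset.disjoint_right.mp hPBd (hX₂B x hx).1
  · exact Finset.disjoint_right.mpr fun x hx => Finset.disjoint_right.mp hPBd (hX₃B x hx).1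

end SimpleGraph

theorem stmt_4_general {V : Type*} [Fintype V] (G : SimpleGraph V) (n : ℕ)
    (hchordal : ¬ ∃ (m : ℕ) (v : Fin (m + 4) → V), Function.Injective v ∧
      ∀ i j : Fin (m + 4), G.Adj (v i) (v j) ↔ (j = i + 1 ∨ i = j + 1))
    (hcard : (n : ℝ) - (1 / (4 * 17 ^ 6 * 48 * 192)) * n ≤ Fintype.card V)
    (hclique : ∀ K : Finset V, G.IsClique (K : Set V) →
      (K.card : ℝ) < (1 / (4 * 17 ^ 6 * 48 * 192)) * n) :
    ∃ (Z : Set V) (X₁ X₂ X₃ : Finset V),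
      (∃ K₁ K₂ : Set V, G.IsClique K₁ ∧ G.IsClique K₂ ∧ Z = K₁ ∪ K₂) ∧
      (∀ x ∈ X₁, x ∉ Z) ∧ (∀ x ∈ X₂, x ∉ Z) ∧ (∀ x ∈ X₃, x ∉ Z) ∧
      Disjoint X₁ X₂ ∧ Disjoint X₁ X₃ ∧ Disjoint X₂ X₃ ∧
      (∀ u ∈ X₁, ∀ v ∈ X₂, ¬ G.Adj u v) ∧
      (∀ u ∈ X₁, ∀ v ∈ X₃, ¬ G.Adj u v) ∧
      (∀ u ∈ X₂, ∀ v ∈ X₃, ¬ G.Adj u v) ∧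
      X₁.card = ⌈(n : ℝ) / 17⌉₊ ∧ X₂.card = ⌈(n : ℝ) / 17⌉₊ ∧ X₃.card = ⌈(n : ℝ) / 17⌉₊ := by
  set ε : ℝ := 1 / (4 * 17 ^ 6 * 48 * 192)
  have hε : ε = 1 / 889807343616 := by norm_num [ε]
  have hn : 0 < ε * n := by simpa using hclique ∅ (by simp)
  have hV : Nonempty V := Fintype.card_pos_iff.mp <| by
    have : (0 : ℝ) < Fintype.card V := by rw [hε] at hn hcard; linarith
    exact_mod_cast this
  have hεn : 1 < ε * n := by simpa using hclique {Classical.arbitrary V} (by simp)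
  have hκ : ∀ K : Finset V, G.IsClique (K : Set V) → #K ≤ ⌊ε * n⌋₊ := fun K hK =>
    Nat.le_floor (hclique K hK).le
  have ht : 8 * ⌈(n : ℝ) / 17⌉₊ + 6 * ⌊ε * n⌋₊ ≤ Fintype.card V := by
    have h1 := Nat.ceil_lt_add_one (show 0 ≤ (n : ℝ) / 17 by positivity)
    have h2 := Nat.floor_le hn.le
    rw [← Nat.cast_le (α := ℝ)]
    push_cast
    rw [hε] at hεn h2 hcard
    linarith
  obtain ⟨K₁, K₂, X₁, X₂, X₃, hK₁, hK₂, hZ₁, hZ₂, hZ₃, h₁₂, h₁₃, h₂₃, a₁₂, a₁₃, a₂₃, c₁, c₂, c₃⟩ :=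
    SimpleGraph.IsChordal.exists_isClique_anticomplete_triple hchordal _ _ hκ ht
  exact ⟨_, X₁, X₂, X₃, ⟨K₁, K₂, hK₁, hK₂, rfl⟩, hZ₁, hZ₂, hZ₃, h₁₂, h₁₃, h₂₃,
    a₁₂, a₁₃, a₂₃, c₁, c₂, c₃⟩

/-- Let `ε = 1/(4·17⁶·48·192)` and let `G` be a chordal graph on at least
`n - εn` vertices with no clique of size `εn`. Then there is a set `Z` which is the union
of at most 2 cliques and pairwise disjoint, pairwise anticomplete sets `X₁, X₂, X₃`
disjoint from `Z` with `|Xᵢ| = ⌈n/17⌉`. -/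
theorem stmt_4 {V : Type*} [Fintype V] [DecidableEq V] (G : SimpleGraph V) (n : ℕ)
    (hchordal : ¬ ∃ (m : ℕ) (v : Fin (m + 4) → V), Function.Injective v ∧
      ∀ i j : Fin (m + 4), G.Adj (v i) (v j) ↔ (j = i + 1 ∨ i = j + 1))
    (hcard : (n : ℝ) - (1 / (4 * 17 ^ 6 * 48 * 192)) * n ≤ Fintype.card V)
    (hclique : ∀ K : Finset V, G.IsClique (K : Set V) →
      (K.card : ℝ) < (1 / (4 * 17 ^ 6 * 48 * 192)) * n) :
    ∃ (Z : Set V) (X₁ X₂ X₃ : Finset V),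
      (∃ K₁ K₂ : Set V, G.IsClique K₁ ∧ G.IsClique K₂ ∧ Z = K₁ ∪ K₂) ∧
      (∀ x ∈ X₁, x ∉ Z) ∧ (∀ x ∈ X₂, x ∉ Z) ∧ (∀ x ∈ X₃, x ∉ Z) ∧
      Disjoint X₁ X₂ ∧ Disjoint X₁ X₃ ∧ Disjoint X₂ X₃ ∧
      (∀ u ∈ X₁, ∀ v ∈ X₂, ¬ G.Adj u v) ∧
      (∀ u ∈ X₁, ∀ v ∈ X₃, ¬ G.Adj u v) ∧
      (∀ u ∈ X₂, ∀ v ∈ X₃, ¬ G.Adj u v) ∧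
      X₁.card = ⌈(n : ℝ) / 17⌉₊ ∧ X₂.card = ⌈(n : ℝ) / 17⌉₊ ∧ X₃.card = ⌈(n : ℝ) / 17⌉₊ :=
  stmt_4_general G n hchordal hcard hclique
end

section
/- Let D be a connected graph and b ∈ V(D). For each clique K of D \ {b}, let (A(K), C(K), B(K)) be the b-canonical separation for K. Let 𝒦 be the set of cliques K for which A(K) is maximal under inclusion (among all canonical separations). Then for any two K_1, K_2 ∈ 𝒦 we have C(K_1) ∩ A(K_2) = ∅ and C(K_2) ∩ A(K_1) = ∅. -/
/-- The component `B(K)` of `D \ K` containing `b`. -/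
def bComp {V : Type*} (G : SimpleGraph V) (b : V) (K : Set V) : Set V :=
  {v : V | ∃ (hv : v ∈ Kᶜ) (hb : b ∈ Kᶜ), (G.induce Kᶜ).Reachable ⟨b, hb⟩ ⟨v, hv⟩}

/-- `C(K) = N(B(K))`. -/
def cSet {V : Type*} (G : SimpleGraph V) (b : V) (K : Set V) : Set V :=
  {v : V | v ∉ bComp G b K ∧ ∃ u ∈ bComp G b K, G.Adj u v}

/-- `A(K) = V(D) \ (B(K) ∪ C(K))`. -/
def aSet {V : Type*} (G : SimpleGraph V) (b : V) (K : Set V) : Set V :=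
  (bComp G b K ∪ cSet G b K)ᶜ

/-- `K` is a clique not containing `b` whose canonical separation has `A(K)` maximal. -/
def IsMaxSep {V : Type*} (G : SimpleGraph V) (b : V) (K : Set V) : Prop :=
  G.IsClique K ∧ b ∉ K ∧
    ∀ K' : Set V, G.IsClique K' → b ∉ K' → ¬ (aSet G b K ⊂ aSet G b K')

/-!
Suppose `x ∈ C(K₁) ∩ A(K₂)`. Since `C(K₁) ⊆ K₁` is a clique, every vertex of `C(K₁)` is `x` or a
neighbour of `x`, and `x` is neither in `B(K₂)` nor adjacent to it; so `C(K₁)` misses `B(K₂)`.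
The connected set `B(K₂) ∋ b` therefore cannot leave `B(K₁)`, whose boundary is `C(K₁)`, and
`B(K₂) ⊆ B(K₁)` gives `A(K₁) ⊆ A(K₂)`. As `x ∈ A(K₂) \ A(K₁)`, the inclusion is strict,
contradicting the maximality of `A(K₁)`.
-/

section CanonicalSeparation

open SimpleGraph

variable {V : Type*} {G : SimpleGraph V} {b : V} {K K₁ K₂ : Set V}

lemma mem_bComp_self (hb : b ∉ K) : b ∈ bComp G b K :=
  ⟨hb, hb, Reachable.refl _⟩

lemma mem_bComp_of_reachable {hb : b ∈ Kᶜ} {w : ↥Kᶜ} (h : (G.induce Kᶜ).Reachable ⟨b, hb⟩ w) :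
    (w : V) ∈ bComp G b K :=
  ⟨w.2, hb, h⟩

lemma mem_bComp_or_mem_cSet_of_adj {u v : V} (hu : u ∈ bComp G b K) (huv : G.Adj u v) :
    v ∈ bComp G b K ∨ v ∈ cSet G b K := by
  by_cases hv : v ∈ bComp G b K
  · exact Or.inl hv
  · exact Or.inr ⟨hv, u, hu, huv⟩

lemma cSet_subset : cSet G b K ⊆ K := by
  rintro c ⟨hcB, u, ⟨_, hb, hr⟩, huc⟩
  by_contra hc
  exact hcB ⟨hc, hb, hr.trans (Adj.reachable (G := G.induce Kᶜ) (v := ⟨c, hc⟩) huc)⟩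

lemma bComp_subset_bComp (hb : b ∉ K₁) (hdisj : Disjoint (cSet G b K₁) (bComp G b K₂)) :
    bComp G b K₂ ⊆ bComp G b K₁ := by
  rintro _ ⟨_, hb₂, hr⟩
  suffices h : ∀ w : ↥K₂ᶜ, Relation.ReflTransGen (G.induce K₂ᶜ).Adj ⟨b, hb₂⟩ w →
      (w : V) ∈ bComp G b K₁ from h _ ((reachable_iff_reflTransGen _ _).1 hr)
  intro w hbw
  induction hbw with
  | refl => exact mem_bComp_self hb
  | @tail u v hbu huv ih =>
    have hv₂ : (v : V) ∈ bComp G b K₂ :=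
      mem_bComp_of_reachable (((reachable_iff_reflTransGen _ _).2 hbu).trans huv.reachable)
    exact (mem_bComp_or_mem_cSet_of_adj ih huv).resolve_right
      fun hv₁ => hdisj.notMem_of_mem_left hv₁ hv₂

lemma aSet_subset_aSet (hB : bComp G b K₂ ⊆ bComp G b K₁) : aSet G b K₁ ⊆ aSet G b K₂ := by
  refine Set.compl_subset_compl.2 (Set.union_subset (hB.trans Set.subset_union_left) ?_)
  rintro c ⟨-, u, hu, huc⟩
  exact mem_bComp_or_mem_cSet_of_adj (hB hu) huc

lemma disjoint_cSet_bComp_of_mem (hK₁ : G.IsClique K₁) {x : V} (hx₁ : x ∈ cSet G b K₁)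
    (hx₂ : x ∈ aSet G b K₂) : Disjoint (cSet G b K₁) (bComp G b K₂) := by
  simp only [aSet, Set.mem_compl_iff, Set.mem_union, not_or] at hx₂
  refine Set.disjoint_left.2 fun z hz hzB => ?_
  rcases eq_or_ne z x with rfl | hzx
  · exact hx₂.1 hzB
  · have hadj : G.Adj z x := hK₁ (cSet_subset hz) (cSet_subset hx₁) hzx
    exact (mem_bComp_or_mem_cSet_of_adj hzB hadj).elim hx₂.1 hx₂.2

lemma cSet_inter_aSet_eq_empty (h₁ : IsMaxSep G b K₁) (hK₂ : G.IsClique K₂) (hb₂ : b ∉ K₂) :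
    cSet G b K₁ ∩ aSet G b K₂ = ∅ := by
  refine Set.eq_empty_iff_forall_notMem.2 fun x ⟨hx₁, hx₂⟩ => ?_
  obtain ⟨hK₁, hb₁, hmax⟩ := h₁
  have hA : aSet G b K₁ ⊆ aSet G b K₂ :=
    aSet_subset_aSet (bComp_subset_bComp hb₁ (disjoint_cSet_bComp_of_mem hK₁ hx₁ hx₂))
  have hxA₁ : x ∉ aSet G b K₁ := fun h => h (Or.inr hx₁)
  exact hmax K₂ hK₂ hb₂ ⟨hA, fun h => hxA₁ (h hx₂)⟩

end CanonicalSeparation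

theorem stmt_10_general {V : Type*} (G : SimpleGraph V) (b : V)
    (K₁ K₂ : Set V) (h₁ : IsMaxSep G b K₁) (h₂ : IsMaxSep G b K₂) :
    cSet G b K₁ ∩ aSet G b K₂ = ∅ ∧ cSet G b K₂ ∩ aSet G b K₁ = ∅ :=
  ⟨cSet_inter_aSet_eq_empty h₁ h₂.1 h₂.2.1, cSet_inter_aSet_eq_empty h₂ h₁.1 h₁.2.1⟩

/-- For two cliques `K₁, K₂` whose b-canonical separations have maximal `A`-side,
`C(K₁) ∩ A(K₂) = ∅` and `C(K₂) ∩ A(K₁) = ∅`. -/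
theorem stmt_10 {V : Type*} (G : SimpleGraph V) (hG : G.Connected) (b : V)
    (K₁ K₂ : Set V) (h₁ : IsMaxSep G b K₁) (h₂ : IsMaxSep G b K₂) :
    cSet G b K₁ ∩ aSet G b K₂ = ∅ ∧ cSet G b K₂ ∩ aSet G b K₁ = ∅ :=
  stmt_10_general G b K₁ K₂ h₁ h₂
end

section
/- Let G be a graph such that every nonempty induced subgraph of G contains a vertex whose neighborhood is the union of at most two cliques. Then for every vertex set S ⊆ V(G), the clique cover number of S satisfies κ(S) ≤ C(α(S)+1, 2), where α(S) is the maximum size of a stable set in G[S]. -/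
/-!
Pick a vertex `v` of `S` whose neighbourhood in `S` lies in two cliques. The closed
neighbourhood of `v` in `S` is then covered by two cliques, and the rest `S'` of `S` has
`α(S') ≤ α(S) - 1`, because `v` extends every stable set of `S'`. Hence
`κ(S) ≤ κ(S') + 2`, which fits into `C(α + 1, 2) = C(α, 2) + α` once `α ≥ 2`; for `α ≤ 1`
the set `S` is empty or a clique.
-/

open Finset

namespace SimpleGraph

variable {V : Type*} {G : SimpleGraph V}

def IsCliqueCover (G : SimpleGraph V) (S : Finset V) (F : Finset (Finset V)) : Prop :=
  (∀ K ∈ F, G.IsClique (K : Set V) ∧ K ⊆ S) ∧ ∀ v ∈ S, ∃ K ∈ F, v ∈ K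

lemma isCliqueCover_empty : G.IsCliqueCover ∅ ∅ := by
  simp [IsCliqueCover]

lemma IsClique.isCliqueCover_singleton {S : Finset V} (h : G.IsClique (S : Set V)) :
    G.IsCliqueCover S {S} := by
  simp [IsCliqueCover, h]

lemma eq_empty_of_forall_isIndepSet_card_le_zero {S : Finset V}
    (hS : ∀ T ⊆ S, G.IsIndepSet (T : Set V) → #T ≤ 0) : S = ∅ :=
  eq_empty_of_forall_notMem fun v hv => by simpa using hS {v} (by simpa) (by simp)

variable [DecidableEq V]

lemma IsCliqueCover.union {S₁ S₂ : Finset V} {F₁ F₂ : Finset (Finset V)}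
    (h₁ : G.IsCliqueCover S₁ F₁) (h₂ : G.IsCliqueCover S₂ F₂) :
    G.IsCliqueCover (S₁ ∪ S₂) (F₁ ∪ F₂) := by
  refine ⟨fun K hK => ?_, fun v hv => ?_⟩
  · rcases mem_union.mp hK with hK | hK
    · exact ⟨(h₁.1 K hK).1, (h₁.1 K hK).2.trans subset_union_left⟩
    · exact ⟨(h₂.1 K hK).1, (h₂.1 K hK).2.trans subset_union_right⟩
  · rcases mem_union.mp hv with hv | hv
    · obtain ⟨K, hK, hvK⟩ := h₁.2 v hv
      exact ⟨K, mem_union_left _ hK, hvK⟩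
    · obtain ⟨K, hK, hvK⟩ := h₂.2 v hv
      exact ⟨K, mem_union_right _ hK, hvK⟩

lemma isClique_of_forall_isIndepSet_card_le_one {S : Finset V}
    (hS : ∀ T ⊆ S, G.IsIndepSet (T : Set V) → #T ≤ 1) : G.IsClique (S : Set V) := by
  intro x hx y hy hxy
  by_contra hadj
  have hpair : G.IsIndepSet ({x, y} : Finset V) := by
    rw [coe_pair, ← isClique_compl, isClique_pair]
    exact fun _ => (compl_adj G x y).mpr ⟨hxy, hadj⟩
  have := hS {x, y} (by simp [insert_subset_iff, mem_coe.mp hx, mem_coe.mp hy]) hpair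
  rw [card_pair hxy] at this
  omega

variable [DecidableRel G.Adj]

lemma exists_isCliqueCover_closedNbhd {S : Finset V} {v : V} {K₁ K₂ : Set V} (hv : v ∈ S)
    (hK₁ : G.IsClique K₁) (hK₂ : G.IsClique K₂) (hN : G.neighborSet v ∩ S ⊆ K₁ ∪ K₂) :
    ∃ F, #F ≤ 2 ∧ G.IsCliqueCover (insert v (S.filter (G.Adj v))) F := by
  classical
  set A := insert v (S.filter fun u => u ∈ K₁ ∧ G.Adj v u)
  set B := S.filter fun u => u ∈ K₂ ∧ G.Adj v u
  refine ⟨{A, B}, card_le_two, fun K hK => ?_, fun u hu => ?_⟩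
  · rcases mem_insert.mp hK with rfl | hK
    · refine ⟨?_, insert_subset_insert _ (monotone_filter_right _ fun u _ hu => hu.2)⟩
      rw [coe_insert]
      exact (hK₁.subset fun u hu => (mem_filter.mp hu).2.1).insert
        fun u hu _ => (mem_filter.mp hu).2.2
    · rw [mem_singleton.mp hK]
      exact ⟨hK₂.subset fun u hu => (mem_filter.mp hu).2.1,
        (monotone_filter_right _ fun u _ hu => hu.2).trans (subset_insert _ _)⟩
  · rcases mem_insert.mp hu with rfl | hu
    · exact ⟨A, mem_insert_self _ _, mem_insert_self _ _⟩
    · obtain ⟨huS, hadj⟩ := mem_filter.mp hu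
      rcases hN ⟨hadj, huS⟩ with huK | huK
      · exact ⟨A, mem_insert_self _ _, mem_insert_of_mem (by simp [huS, huK, hadj])⟩
      · exact ⟨B, by simp, by simp [B, huS, huK, hadj]⟩

lemma card_le_of_isIndepSet_subset_sdiff_closedNbhd {S T : Finset V} {v : V} {a : ℕ}
    (hv : v ∈ S) (hS : ∀ T ⊆ S, G.IsIndepSet (T : Set V) → #T ≤ a + 1)
    (hT : T ⊆ S \ insert v (S.filter (G.Adj v))) (hTi : G.IsIndepSet (T : Set V)) :
    #T ≤ a := by
  have hnonadj : ∀ u ∈ T, u ≠ v ∧ ¬G.Adj v u := fun u hu => by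
    have := hT hu
    simp_all
  have hvT : v ∉ T := fun h => (hnonadj v h).1 rfl
  have hins : G.IsIndepSet (insert v T : Finset V) := by
    rw [coe_insert, ← isClique_compl]
    exact ((G.isClique_compl).mpr hTi).insert fun u hu huv =>
      (compl_adj G v u).mpr ⟨huv, (hnonadj u hu).2⟩
  have := hS (insert v T) (insert_subset hv (hT.trans sdiff_subset)) hins
  rw [card_insert_of_notMem hvT] at this
  omega

theorem exists_isCliqueCover_card_le_choose
    (hG : ∀ S : Finset V, S.Nonempty → ∃ v ∈ S, ∃ K₁ K₂ : Set V,
      G.IsClique K₁ ∧ G.IsClique K₂ ∧ G.neighborSet v ∩ S ⊆ K₁ ∪ K₂) :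
    ∀ (a : ℕ) (S : Finset V), (∀ T ⊆ S, G.IsIndepSet (T : Set V) → #T ≤ a) →
      ∃ F, #F ≤ (a + 1).choose 2 ∧ G.IsCliqueCover S F
  | 0, S, hS => ⟨∅, le_rfl, by
      rw [eq_empty_of_forall_isIndepSet_card_le_zero hS]; exact isCliqueCover_empty⟩
  | 1, S, hS => ⟨{S}, by simp,
      (isClique_of_forall_isIndepSet_card_le_one hS).isCliqueCover_singleton⟩
  | a + 2, S, hS => by
    obtain rfl | hne := S.eq_empty_or_nonempty
    · exact ⟨∅, Nat.zero_le _, isCliqueCover_empty⟩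
    obtain ⟨v, hv, K₁, K₂, hK₁, hK₂, hN⟩ := hG S hne
    set N := insert v (S.filter (G.Adj v))
    obtain ⟨FN, hFN, hcovN⟩ := exists_isCliqueCover_closedNbhd hv hK₁ hK₂ hN
    obtain ⟨F', hF', hcov'⟩ := exists_isCliqueCover_card_le_choose hG (a + 1) (S \ N)
      fun T hT hTi => card_le_of_isIndepSet_subset_sdiff_closedNbhd hv hS hT hTi
    have hSN : N ∪ S \ N = S :=
      union_sdiff_of_subset (insert_subset hv (filter_subset _ _))
    refine ⟨FN ∪ F', ?_, hSN ▸ hcovN.union hcov'⟩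
    have hchoose : (a + 2 + 1).choose 2 = (a + 1 + 1).choose 2 + (a + 2) := by
      rw [Nat.choose_succ_succ', Nat.choose_one_right, add_comm]
    calc #(FN ∪ F') ≤ #FN + #F' := card_union_le _ _
      _ ≤ (a + 2 + 1).choose 2 := by omega

end SimpleGraph

theorem stmt_15_general {V : Type*} (G : SimpleGraph V)
    (hnbhd : ∀ S : Set V, S.Nonempty → ∃ v ∈ S, ∃ K₁ K₂ : Set V,
      K₁ ⊆ S ∧ K₂ ⊆ S ∧ G.IsClique K₁ ∧ G.IsClique K₂ ∧
      G.neighborSet v ∩ S ⊆ K₁ ∪ K₂)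
    (S : Finset V) (a : ℕ)
    (ha : ∀ T : Finset V, T ⊆ S → (∀ u ∈ T, ∀ v ∈ T, u ≠ v → ¬ G.Adj u v) → T.card ≤ a) :
    ∃ F : Finset (Finset V), F.card ≤ (a + 1).choose 2 ∧
      (∀ K ∈ F, G.IsClique (K : Set V) ∧ K ⊆ S) ∧
      ∀ v ∈ S, ∃ K ∈ F, v ∈ K := by
  classical
  refine G.exists_isCliqueCover_card_le_choose (fun U hU => ?_) a S
    fun T hT hTi => ha T hT fun u hu v hv => hTi hu hv
  obtain ⟨v, hv, K₁, K₂, -, -, hK₁, hK₂, hN⟩ := hnbhd U (coe_nonempty.mpr hU)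
  exact ⟨v, hv, K₁, K₂, hK₁, hK₂, hN⟩

/-- If every nonempty induced subgraph of `G` has a vertex whose neighborhood
is the union of at most two cliques, then for every vertex set `S`, the clique cover number
of `S` is at most `C(α(S)+1, 2)`, where `α(S)` bounds the size of stable sets of `G[S]`. -/
theorem stmt_15 {V : Type*} [Fintype V] [DecidableEq V] (G : SimpleGraph V)
    (hnbhd : ∀ S : Set V, S.Nonempty → ∃ v ∈ S, ∃ K₁ K₂ : Set V,
      K₁ ⊆ S ∧ K₂ ⊆ S ∧ G.IsClique K₁ ∧ G.IsClique K₂ ∧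
      G.neighborSet v ∩ S ⊆ K₁ ∪ K₂)
    (S : Finset V) (a : ℕ)
    (ha : ∀ T : Finset V, T ⊆ S → (∀ u ∈ T, ∀ v ∈ T, u ≠ v → ¬ G.Adj u v) → T.card ≤ a) :
    ∃ F : Finset (Finset V), F.card ≤ (a + 1).choose 2 ∧
      (∀ K ∈ F, G.IsClique (K : Set V) ∧ K ⊆ S) ∧
      ∀ v ∈ S, ∃ K ∈ F, v ∈ K :=
  stmt_15_general G hnbhd S a ha
end

section
/- Let Σ be a pyramid in a graph G with apex a, base triangle b_1b_2b_3 and paths P_1, P_2, P_3, and let p be a vertex of G \ Σ that is major for Σ and nonadjacent to a. If G contains no theta, then for i = 1, 2 (where p is anticomplete to P_3), p has a neighbor in P_i \ {b_i}, i.e., N(p) ∩ P_i ≠ {b_i}, unless one of b_1, b_2, b_3 is a loaded pyramid corner. -/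
/-- `q` enumerates an induced path of `G`: vertices are distinct and adjacent iff
consecutive. -/
def IsIndPathFun {V : Type*} (G : SimpleGraph V) {n : ℕ} (q : Fin (n + 1) → V) : Prop :=
  Function.Injective q ∧
    ∀ i j : Fin (n + 1), G.Adj (q i) (q j) ↔ (i.val + 1 = j.val ∨ j.val + 1 = i.val)

/-- A pyramid with apex `a`, base triangle `b₁b₂b₃` and induced paths `q₁, q₂, q₃` from `a`
to `b₁, b₂, b₃` such that the union of any two of the paths (plus the base edge) is a
hole. -/
def IsPyramid {V : Type*} (G : SimpleGraph V) (a b₁ b₂ b₃ : V) {n₁ n₂ n₃ : ℕ}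
    (q₁ : Fin (n₁ + 1) → V) (q₂ : Fin (n₂ + 1) → V) (q₃ : Fin (n₃ + 1) → V) : Prop :=
  IsIndPathFun G q₁ ∧ IsIndPathFun G q₂ ∧ IsIndPathFun G q₃ ∧
  q₁ 0 = a ∧ q₂ 0 = a ∧ q₃ 0 = a ∧
  q₁ (Fin.last n₁) = b₁ ∧ q₂ (Fin.last n₂) = b₂ ∧ q₃ (Fin.last n₃) = b₃ ∧
  G.Adj b₁ b₂ ∧ G.Adj b₂ b₃ ∧ G.Adj b₁ b₃ ∧
  Set.range q₁ ∩ Set.range q₂ = {a} ∧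
  Set.range q₁ ∩ Set.range q₃ = {a} ∧
  Set.range q₂ ∩ Set.range q₃ = {a} ∧
  (∀ u ∈ Set.range q₁, ∀ v ∈ Set.range q₂, u ≠ a → v ≠ a → G.Adj u v → u = b₁ ∧ v = b₂) ∧
  (∀ u ∈ Set.range q₁, ∀ v ∈ Set.range q₃, u ≠ a → v ≠ a → G.Adj u v → u = b₁ ∧ v = b₃) ∧
  (∀ u ∈ Set.range q₂, ∀ v ∈ Set.range q₃, u ≠ a → v ≠ a → G.Adj u v → u = b₂ ∧ v = b₃) ∧
  3 ≤ n₁ + n₂ ∧ 3 ≤ n₁ + n₃ ∧ 3 ≤ n₂ + n₃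

/-- `G` contains a theta: two vertices joined by three internally disjoint induced paths,
each of length at least 2, with pairwise anticomplete interiors. -/
def HasTheta {V : Type*} (G : SimpleGraph V) : Prop :=
  ∃ (x y : V) (n₁ n₂ n₃ : ℕ) (q₁ : Fin (n₁ + 1) → V) (q₂ : Fin (n₂ + 1) → V)
    (q₃ : Fin (n₃ + 1) → V),
    2 ≤ n₁ ∧ 2 ≤ n₂ ∧ 2 ≤ n₃ ∧
    IsIndPathFun G q₁ ∧ IsIndPathFun G q₂ ∧ IsIndPathFun G q₃ ∧
    q₁ 0 = x ∧ q₂ 0 = x ∧ q₃ 0 = x ∧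
    q₁ (Fin.last n₁) = y ∧ q₂ (Fin.last n₂) = y ∧ q₃ (Fin.last n₃) = y ∧
    (∀ u ∈ Set.range q₁ \ {x, y}, ∀ v ∈ Set.range q₂ \ {x, y}, u ≠ v ∧ ¬ G.Adj u v) ∧
    (∀ u ∈ Set.range q₁ \ {x, y}, ∀ v ∈ Set.range q₃ \ {x, y}, u ≠ v ∧ ¬ G.Adj u v) ∧
    (∀ u ∈ Set.range q₂ \ {x, y}, ∀ v ∈ Set.range q₃ \ {x, y}, u ≠ v ∧ ¬ G.Adj u v)

/-- `c` is a loaded pyramid corner of `G`: there is a pyramid with apex `a`, base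
`b₁b₂b₃`, `a` adjacent to `b₂ = c`, together with a path `p` attached as in the definition
of a loaded pyramid. -/
def IsLoadedPyramidCorner {V : Type*} (G : SimpleGraph V) (c : V) : Prop :=
  ∃ (a b₁ b₂ b₃ : V) (n₁ n₃ : ℕ) (q₁ : Fin (n₁ + 1) → V) (q₂ : Fin (1 + 1) → V)
    (q₃ : Fin (n₃ + 1) → V) (k : ℕ) (p : Fin (k + 1) → V),
    IsPyramid G a b₁ b₂ b₃ q₁ q₂ q₃ ∧ c = b₂ ∧ G.Adj a b₂ ∧
    IsIndPathFun G p ∧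
    (∀ w ∈ Set.range p, w ∉ Set.range q₁ ∪ Set.range q₂ ∪ Set.range q₃) ∧
    G.Adj (p 0) b₂ ∧
    (∃ v ∈ Set.range q₁, v ≠ a ∧ v ≠ b₁ ∧ G.Adj (p (Fin.last k)) v) ∧
    (∀ u ∈ Set.range q₃, ∀ w ∈ Set.range p, ¬ G.Adj u w) ∧
    (∀ w ∈ Set.range p, w ≠ p 0 → ¬ G.Adj b₂ w) ∧
    (∀ v ∈ Set.range q₁, v ≠ b₁ → ∀ w ∈ Set.range p, w ≠ p (Fin.last k) → ¬ G.Adj v w)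

/-- `p` is a one-vertex corner path for corner `c` (with the other two base vertices
`d, e` and corner path `Pc` the path of the pyramid ending at `c`, and `Sv` the vertex set
of the pyramid): `p` is adjacent to `d` and `e`, has a neighbor in `Pc \ {c}`, and has no
other neighbors in `Sv \ {c}`. -/
def IsCornerVertex {V : Type*} (G : SimpleGraph V) (p c d e : V) (Pc Sv : Set V) : Prop :=
  G.Adj p d ∧ G.Adj p e ∧ (∃ v ∈ Pc, v ≠ c ∧ G.Adj p v) ∧
    ∀ v ∈ Sv, v ≠ c → G.Adj p v → (v = d ∨ v = e ∨ v ∈ Pc)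

/-!
Suppose `N(p) ∩ P₁ = {b₁}`; the case of `P₂` is symmetric (swap the roles of `P₁` and `P₂`).
As `N(p) ∩ Σ` is not contained in the base and `p` misses `P₃`, `p` has a neighbour `w` in the
interior of `P₂`. If `a b₁` is an edge, then `p` is a one-vertex path turning `b₁` into a loaded
pyramid corner. Otherwise `P₁` has length at least two, and the path going along `P₂` from `a` to
the first neighbour of `p`, then through `p` to `b₁`, forms a theta between `a` and `b₁` together
with `P₁` and `P₃ b₁`.
-/

namespace IsIndPathFun

variable {V : Type*} {G : SimpleGraph V} {n : ℕ} {q : Fin (n + 1) → V}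

theorem snoc (hq : IsIndPathFun G q) {b : V} (hb : b ∉ Set.range q)
    (hadj : ∀ i, G.Adj (q i) b ↔ i = Fin.last n) :
    IsIndPathFun G (Fin.snoc q b : Fin (n + 2) → V) := by
  refine ⟨Fin.snoc_injective_of_injective hq.1 hb, fun i j => ?_⟩
  induction i using Fin.lastCases with
  | cast i =>
    induction j using Fin.lastCases with
    | cast j => simpa only [Fin.snoc_castSucc, Fin.val_castSucc] using hq.2 i j
    | last =>
      rw [Fin.snoc_castSucc, Fin.snoc_last, hadj, Fin.ext_iff]
      simp only [Fin.val_castSucc, Fin.val_last]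
      omega
  | last =>
    induction j using Fin.lastCases with
    | cast j =>
      rw [Fin.snoc_castSucc, Fin.snoc_last, G.adj_comm, hadj, Fin.ext_iff]
      simp only [Fin.val_castSucc, Fin.val_last]
      omega
    | last => simp

theorem comp_castLE (hq : IsIndPathFun G q) {m : ℕ} (h : m + 1 ≤ n + 1) :
    IsIndPathFun G (q ∘ Fin.castLE h) :=
  ⟨hq.1.comp (Fin.castLE_injective h), fun _ _ => hq.2 _ _⟩

theorem not_adj_zero_last (hq : IsIndPathFun G q) (hn : 2 ≤ n) :
    ¬ G.Adj (q 0) (q (Fin.last n)) := by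
  rw [hq.2]
  simp only [Fin.val_zero, Fin.val_last]
  omega

/-- `r` runs along `q` to the first neighbour of `p`, then steps to `p`. -/
theorem exists_snoc_first_adj (hq : IsIndPathFun G q) {p : V} (hp : p ∉ Set.range q)
    {j : Fin (n + 1)} (hj : G.Adj (q j) p) :
    ∃ (m : ℕ) (r : Fin (m + 2) → V), IsIndPathFun G r ∧ r 0 = q 0 ∧
      r (Fin.last _) = p ∧ ∀ i : Fin (m + 1), r i.castSucc ∈ q '' Set.Iic j := by
  obtain ⟨k, hk, hmin⟩ := wellFounded_lt.has_min {k | G.Adj (q k) p} ⟨j, hj⟩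
  have hkj : k ≤ j := not_lt.1 (hmin j hj)
  refine ⟨k, Fin.snoc (q ∘ Fin.castLE k.isLt) p, ?_, ?_, Fin.snoc_last _ _, fun i => ?_⟩
  · refine (hq.comp_castLE k.isLt).snoc ?_ fun i => ⟨fun h => ?_, ?_⟩
    · exact fun ⟨i, hi⟩ => hp ⟨_, hi⟩
    · have hki : k ≤ Fin.castLE k.isLt i := not_lt.1 (hmin _ h)
      rw [Fin.le_iff_val_le_val, Fin.val_castLE] at hki
      exact Fin.ext (by simp only [Fin.val_last]; omega)
    · rintro rfl; exact hk
  · exact Fin.snoc_castSucc (i := 0) ..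
  · rw [Fin.snoc_castSucc]
    exact ⟨_, le_trans (Fin.mk_le_mk.2 (by omega)) hkj, rfl⟩

end IsIndPathFun

namespace IsPyramid

open Set

variable {V : Type*} {G : SimpleGraph V} {a b₁ b₂ b₃ : V} {n₁ n₂ n₃ : ℕ}
  {q₁ : Fin (n₁ + 1) → V} {q₂ : Fin (n₂ + 1) → V} {q₃ : Fin (n₃ + 1) → V}

theorem swap (h : IsPyramid G a b₁ b₂ b₃ q₁ q₂ q₃) : IsPyramid G a b₂ b₁ b₃ q₂ q₁ q₃ := by
  obtain ⟨h1, h2, h3, h10, h20, h30, h1l, h2l, h3l, hb12, hb23, hb13, hi12, hi13, hi23,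
    ha12, ha13, ha23, hl1, hl2, hl3⟩ := h
  refine ⟨h2, h1, h3, h20, h10, h30, h2l, h1l, h3l, hb12.symm, hb13, hb23,
    by rwa [inter_comm], hi23, hi13, fun u hu v hv hua hva huv => ?_, ha23, ha13,
    by omega, by omega, by omega⟩
  exact (ha12 v hv u hu hva hua huv.symm).symm

theorem isLoadedPyramidCorner_of_adj {q₂ : Fin (1 + 1) → V}
    (hpyr : IsPyramid G a b₁ b₂ b₃ q₁ q₂ q₃) {p : V}
    (hp : p ∉ range q₁ ∪ range q₂ ∪ range q₃) (hpb₂ : G.Adj p b₂)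
    {v : V} (hv : v ∈ range q₁) (hva : v ≠ a) (hvb₁ : v ≠ b₁) (hpv : G.Adj p v)
    (hpq₃ : ∀ u ∈ range q₃, ¬ G.Adj p u) : IsLoadedPyramidCorner G b₂ := by
  have hab₂ : G.Adj a b₂ := by
    obtain ⟨-, h2, -, -, h20, -, -, h2l, -⟩ := hpyr
    rw [← h20, ← h2l, h2.2]
    simp
  refine ⟨a, b₁, b₂, b₃, n₁, n₃, q₁, q₂, q₃, 0, fun _ => p, hpyr, rfl, hab₂,
    ⟨fun i j _ => Fin.ext (by omega), fun i j => by simp [Fin.val_eq_zero]⟩,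
    ?_, hpb₂, ⟨v, hv, hva, hvb₁, hpv⟩, ?_, ?_, ?_⟩
  · rintro _ ⟨_, rfl⟩; exact hp
  · rintro u hu _ ⟨_, rfl⟩ hup; exact hpq₃ u hu hup.symm
  · rintro _ ⟨_, rfl⟩ h; exact absurd rfl h
  · rintro _ _ _ _ ⟨_, rfl⟩ h; exact absurd rfl h

theorem not_adj_apex_b₁ (hpyr : IsPyramid G a b₁ b₂ b₃ q₁ q₂ q₃) (hn₁ : 2 ≤ n₁) :
    ¬ G.Adj a b₁ := by
  obtain ⟨h1, -, -, h10, -, -, h1l, -⟩ := hpyr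
  exact h10 ▸ h1l ▸ h1.not_adj_zero_last hn₁

theorem b₁_ne_apex (hpyr : IsPyramid G a b₁ b₂ b₃ q₁ q₂ q₃) (hn₁ : 1 ≤ n₁) : b₁ ≠ a := by
  obtain ⟨h1, -, -, h10, -, -, h1l, -⟩ := hpyr
  intro h
  have := h1.1 (h1l.trans (h.trans h10.symm))
  simp only [Fin.ext_iff, Fin.val_last, Fin.val_zero] at this
  omega

theorem isIndPathFun_snoc_q₃ (hpyr : IsPyramid G a b₁ b₂ b₃ q₁ q₂ q₃) (hn₁ : 2 ≤ n₁) :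
    IsIndPathFun G (Fin.snoc q₃ b₁ : Fin (n₃ + 2) → V) := by
  have hb₁a := hpyr.b₁_ne_apex (by omega)
  have hab₁ := hpyr.not_adj_apex_b₁ hn₁
  obtain ⟨-, -, h3, -, -, h30, h1l, -, h3l, -, -, hb13, -, hi13, -, -, ha13, -⟩ := hpyr
  refine h3.snoc (fun h => hb₁a (hi13.subset ⟨⟨_, h1l⟩, h⟩)) fun i =>
    ⟨fun h => h3.1 ?_, by rintro rfl; rw [h3l]; exact hb13.symm⟩
  have hia : q₃ i ≠ a := by rintro hia; exact hab₁ (hia ▸ h)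
  rw [h3l, (ha13 b₁ ⟨_, h1l⟩ _ ⟨i, rfl⟩ hb₁a hia h.symm).2]

/-- The theta has ends `a`, `b₁` and paths `P₁`, `r b₁` and `P₃ b₁`. -/
theorem hasTheta_of_path (hpyr : IsPyramid G a b₁ b₂ b₃ q₁ q₂ q₃) (hn₁ : 2 ≤ n₁) {p : V}
    (hp₁ : p ∉ range q₁) (hp₃ : p ∉ range q₃) (hpb₁ : G.Adj p b₁)
    (hpq₁ : ∀ v ∈ range q₁, G.Adj p v → v = b₁) (hpq₃ : ∀ v ∈ range q₃, ¬ G.Adj p v)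
    {m : ℕ} {r : Fin (m + 2) → V} (hr : IsIndPathFun G r) (hr0 : r 0 = a)
    (hrp : r (Fin.last _) = p) (hrq₂ : ∀ i : Fin (m + 1), r i.castSucc ∈ range q₂ \ {b₂}) :
    HasTheta G := by
  have hab₁ := hpyr.not_adj_apex_b₁ hn₁
  have hb₁a := hpyr.b₁_ne_apex (by omega)
  have hR := hpyr.isIndPathFun_snoc_q₃ hn₁
  obtain ⟨h1, -, h3, h10, -, h30, h1l, -, h3l, -, -, hb13, hi12, hi13, hi23,
    ha12, ha13, ha23, -⟩ := hpyr
  have hn₃ : 1 ≤ n₃ := Nat.pos_of_ne_zero fun h => by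
    subst h; exact hab₁ ((h3l.symm.trans h30) ▸ hb13.symm)
  have hrange : ∀ v ∈ range r, v = p ∨ v ∈ range q₂ \ {b₂} := by
    rintro _ ⟨i, rfl⟩
    induction i using Fin.lastCases with
    | last => exact Or.inl hrp
    | cast i => exact Or.inr (hrq₂ i)
  have hq₂b₁ : ∀ v ∈ range q₂ \ {b₂}, ¬ G.Adj v b₁ := by
    rintro v ⟨hv, hvb₂⟩ hvb₁
    by_cases hva : v = a
    · exact hab₁ (hva ▸ hvb₁)
    · exact hvb₂ (ha12 b₁ ⟨_, h1l⟩ v hv hb₁a hva hvb₁.symm).2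
  have hQ : IsIndPathFun G (Fin.snoc r b₁ : Fin (m + 3) → V) := by
    refine hr.snoc (fun h => ?_) fun i => ?_
    · rcases hrange b₁ h with h | h
      · exact G.ne_of_adj hpb₁ h.symm
      · exact hb₁a (hi12.subset ⟨⟨_, h1l⟩, h.1⟩)
    · induction i using Fin.lastCases with
      | last => simpa [hrp] using hpb₁
      | cast i => exact iff_of_false (hq₂b₁ _ (hrq₂ i)) (Fin.castSucc_lt_last i).ne
  refine ⟨a, b₁, n₁, m + 2, n₃ + 1, q₁, Fin.snoc r b₁, Fin.snoc q₃ b₁, hn₁, by omega,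
    by omega, h1, hQ, hR, h10, ?_, ?_, h1l, Fin.snoc_last _ _, Fin.snoc_last _ _, ?_, ?_, ?_⟩
  · rw [← hr0]; exact Fin.snoc_castSucc (i := 0) ..
  · rw [← h30]; exact Fin.snoc_castSucc (i := 0) ..
  all_goals
    simp only [Fin.range_snoc, mem_sdiff, mem_insert_iff, mem_singleton_iff, not_or]
    rintro u ⟨hu, hua, hub⟩ v ⟨hv, hva, hvb⟩
  · replace hv := hv.resolve_left hvb
    rcases hrange v hv with rfl | hv
    · exact ⟨fun h => hp₁ (h ▸ hu), fun h => hub (hpq₁ u hu h.symm)⟩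
    · exact ⟨fun h => hua (hi12.subset ⟨hu, h ▸ hv.1⟩),
        fun h => hub (ha12 u hu v hv.1 hua hva h).1⟩
  · replace hv := hv.resolve_left hvb
    exact ⟨fun h => hua (hi13.subset ⟨hu, h ▸ hv⟩), fun h => hub (ha13 u hu v hv hua hva h).1⟩
  · replace hv := hv.resolve_left hvb
    rcases hrange u (hu.resolve_left hub) with rfl | hu
    · exact ⟨fun h => hp₃ (h ▸ hv), hpq₃ v hv⟩
    · exact ⟨fun h => hua (hi23.subset ⟨hu.1, h ▸ hv⟩),
        fun h => hu.2 (ha23 u hu.1 v hv hua hva h).1⟩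

theorem isLoadedPyramidCorner_or_neighbors_inter_ne (hpyr : IsPyramid G a b₁ b₂ b₃ q₁ q₂ q₃)
    {p : V} (hp : p ∉ range q₁ ∪ range q₂ ∪ range q₃) (hpq₃ : ∀ v ∈ range q₃, ¬ G.Adj p v)
    (htheta : ¬ HasTheta G) {w : V} (hw : w ∈ range q₁ ∪ range q₂) (hwb₁ : w ≠ b₁)
    (hwb₂ : w ≠ b₂) (hpw : G.Adj p w) :
    IsLoadedPyramidCorner G b₁ ∨ {v : V | G.Adj p v} ∩ range q₁ ≠ {b₁} := by
  refine or_iff_not_imp_right.2 fun hA => ?_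
  rw [not_ne_iff] at hA
  obtain ⟨-, h2, -, h10, h20, h30, h1l, h2l, -⟩ := id hpyr
  have hpq₁ : ∀ v ∈ range q₁, G.Adj p v → v = b₁ := fun v hv hpv => hA.subset ⟨hpv, hv⟩
  have hpb₁ : G.Adj p b₁ := (hA.symm.subset rfl).1
  have hpa : ¬ G.Adj p a := hpq₃ a ⟨0, h30⟩
  obtain ⟨j, rfl⟩ : w ∈ range q₂ := hw.resolve_left fun h => hwb₁ (hpq₁ w h hpw)
  obtain ⟨m, rfl⟩ : ∃ m, n₁ = m + 1 := Nat.exists_eq_succ_of_ne_zero fun h => by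
    subst h; exact hpa (h10 ▸ h1l ▸ hpb₁)
  rcases m with _ | m
  · exact hpyr.swap.isLoadedPyramidCorner_of_adj (by rwa [union_comm (range q₂)]) hpb₁
      ⟨j, rfl⟩ (fun h => hpa (h ▸ hpw)) hwb₂ hpw hpq₃
  · obtain ⟨k, r, hr, hr0, hrp, hrq₂⟩ :=
      h2.exists_snoc_first_adj (fun h => hp (Or.inl (Or.inr h))) hpw.symm
    refine absurd (hpyr.hasTheta_of_path (by omega) (fun h => hp (Or.inl (Or.inl h)))
      (fun h => hp (Or.inr h)) hpb₁ hpq₁ hpq₃ hr (hr0.trans h20) hrp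
      fun i => ?_) htheta
    obtain ⟨l, hlj, hl⟩ := hrq₂ i
    refine ⟨⟨l, hl⟩, fun hlb => hwb₂ ?_⟩
    have hl_last : l = Fin.last n₂ := h2.1 (hl.trans (hlb.trans h2l.symm))
    rw [le_antisymm (Fin.le_last j) (hl_last ▸ hlj), h2l]

end IsPyramid

theorem stmt_17_general {V : Type*} (G : SimpleGraph V) (a b₁ b₂ b₃ : V) {n₁ n₂ n₃ : ℕ}
    (q₁ : Fin (n₁ + 1) → V) (q₂ : Fin (n₂ + 1) → V) (q₃ : Fin (n₃ + 1) → V)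
    (hpyr : IsPyramid G a b₁ b₂ b₃ q₁ q₂ q₃) (p : V)
    (hpout : p ∉ Set.range q₁ ∪ Set.range q₂ ∪ Set.range q₃)
    (hnotlocal :
      ¬ (({v ∈ Set.range q₁ ∪ Set.range q₂ ∪ Set.range q₃ | G.Adj p v} ⊆ Set.range q₁) ∨
         ({v ∈ Set.range q₁ ∪ Set.range q₂ ∪ Set.range q₃ | G.Adj p v} ⊆ Set.range q₂) ∨
         ({v ∈ Set.range q₁ ∪ Set.range q₂ ∪ Set.range q₃ | G.Adj p v} ⊆ Set.range q₃) ∨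
         ({v ∈ Set.range q₁ ∪ Set.range q₂ ∪ Set.range q₃ | G.Adj p v} ⊆
            ({b₁, b₂, b₃} : Set V))))
    (hp3 : ∀ v ∈ Set.range q₃, ¬ G.Adj p v)
    (htheta : ¬ HasTheta G) :
    IsLoadedPyramidCorner G b₁ ∨ IsLoadedPyramidCorner G b₂ ∨ IsLoadedPyramidCorner G b₃ ∨
      (({v : V | G.Adj p v} ∩ Set.range q₁ ≠ {b₁}) ∧
       ({v : V | G.Adj p v} ∩ Set.range q₂ ≠ {b₂})) := by
  obtain ⟨w, ⟨hwS, hpw⟩, hwb⟩ :=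
    Set.not_subset.1 fun h => hnotlocal (Or.inr (Or.inr (Or.inr h)))
  simp only [Set.mem_insert_iff, Set.mem_singleton_iff, not_or] at hwb
  have hw : w ∈ Set.range q₁ ∪ Set.range q₂ := hwS.resolve_right fun h => hp3 w h hpw
  rcases hpyr.isLoadedPyramidCorner_or_neighbors_inter_ne hpout hp3 htheta hw hwb.1 hwb.2.1
    hpw with h | h₁
  · exact Or.inl h
  rcases hpyr.swap.isLoadedPyramidCorner_or_neighbors_inter_ne
    (by rwa [Set.union_comm (Set.range q₂)]) hp3 htheta (by rwa [Set.union_comm]) hwb.2.1 hwb.1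
    hpw with h | h₂
  · exact Or.inr (Or.inl h)
  exact Or.inr (Or.inr (Or.inr ⟨h₁, h₂⟩))

/-- Let `Σ` be a pyramid in `G` with apex `a` and let `p ∉ Σ` be major for
`Σ` (its neighborhood in `Σ` is not local and it is not a corner path), nonadjacent to `a`
and anticomplete to `P₃`. If `G` contains no theta, then `N(p) ∩ Pᵢ ≠ {bᵢ}` for `i = 1, 2`,
unless one of `b₁, b₂, b₃` is a loaded pyramid corner. -/
theorem stmt_17 {V : Type*} (G : SimpleGraph V) (a b₁ b₂ b₃ : V) {n₁ n₂ n₃ : ℕ}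
    (q₁ : Fin (n₁ + 1) → V) (q₂ : Fin (n₂ + 1) → V) (q₃ : Fin (n₃ + 1) → V)
    (hpyr : IsPyramid G a b₁ b₂ b₃ q₁ q₂ q₃) (p : V)
    (hpout : p ∉ Set.range q₁ ∪ Set.range q₂ ∪ Set.range q₃)
    (hnotlocal :
      ¬ (({v ∈ Set.range q₁ ∪ Set.range q₂ ∪ Set.range q₃ | G.Adj p v} ⊆ Set.range q₁) ∨
         ({v ∈ Set.range q₁ ∪ Set.range q₂ ∪ Set.range q₃ | G.Adj p v} ⊆ Set.range q₂) ∨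
         ({v ∈ Set.range q₁ ∪ Set.range q₂ ∪ Set.range q₃ | G.Adj p v} ⊆ Set.range q₃) ∨
         ({v ∈ Set.range q₁ ∪ Set.range q₂ ∪ Set.range q₃ | G.Adj p v} ⊆
            ({b₁, b₂, b₃} : Set V))))
    (hnotcorner :
      ¬ (IsCornerVertex G p b₁ b₂ b₃ (Set.range q₁)
            (Set.range q₁ ∪ Set.range q₂ ∪ Set.range q₃) ∨
         IsCornerVertex G p b₂ b₁ b₃ (Set.range q₂)
            (Set.range q₁ ∪ Set.range q₂ ∪ Set.range q₃) ∨
         IsCornerVertex G p b₃ b₁ b₂ (Set.range q₃)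
            (Set.range q₁ ∪ Set.range q₂ ∪ Set.range q₃)))
    (hpa : ¬ G.Adj p a)
    (hp3 : ∀ v ∈ Set.range q₃, ¬ G.Adj p v)
    (htheta : ¬ HasTheta G) :
    IsLoadedPyramidCorner G b₁ ∨ IsLoadedPyramidCorner G b₂ ∨ IsLoadedPyramidCorner G b₃ ∨
      (({v : V | G.Adj p v} ∩ Set.range q₁ ≠ {b₁}) ∧
       ({v : V | G.Adj p v} ∩ Set.range q₂ ≠ {b₂})) :=
  stmt_17_general G a b₁ b₂ b₃ q₁ q₂ q₃ hpyr p hpout hnotlocal hp3 htheta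
end

section
/- Let G be a graph, c ∈ [1/2, 1), and d a positive integer. Suppose that for every normal weight function w on V(G) (i.e., w : V(G) → [0,1] with total weight 1) there is a set X_w ⊆ V(G) with independence number α(X_w) ≤ d such that every connected component of G \ X_w has w-weight at most c. Then G has a tree decomposition in which every bag has independence number at most ((3−c)/(1−c))·d; in particular the tree independence number of G is at most ((3−c)/(1−c))·d. -/
/-!
We build, by induction on `(|U|, |U \ W|)`, a rooted tree decomposition of `G[U]` whose root bag
contains a given `W ⊆ U` with `α(W) ≤ 2d/(1-c)` and all of whose bags have
`α ≤ 2d/(1-c) + d = (3-c)d/(1-c)`. If `α(W) ≤ d/(1-c)`, a vertex of `U \ W` is added to `W`.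
Otherwise let `I` be a maximum independent subset of `W` and `X` a separator for the uniform weight
on `I`. The root bag is `B = W ∪ (U ∩ X)`, and below it hang decompositions of `C ∪ N_B(C)` for
the components `C` of `G[U \ B]`, rooted at `N_B(C)`. These are proper subsets of `U`, since
`|I| > d/(1-c)` forbids every vertex of `I \ X` to have a neighbour in `C`. To bound `α(N_B(C))`,
take an independent `J ⊆ N_B(C) \ X`: the vertices `R` of `I \ X` outside `J` and not adjacent to
it can be exchanged, so `|J| + |R| ≤ |I|`, while the rest of `I` lies in `X` or in the connected
set `C ∪ J ∪ N(J)` avoiding `X`. Hence `|J| ≤ d + c|I|` and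
`α(N_B(C)) ≤ 2d + c · 2d/(1-c) = 2d/(1-c)`.
-/

open Finset

namespace SimpleGraph

universe u

variable {V : Type u} {G : SimpleGraph V}

open scoped Classical in
variable (G) in
noncomputable def indepNumOn (s : Finset V) : ℕ :=
  (s.powerset.filter fun t : Finset V => G.IsIndepSet (t : Set V)).sup card

theorem card_le_indepNumOn {s t : Finset V} (hts : t ⊆ s) (ht : G.IsIndepSet (t : Set V)) :
    t.card ≤ G.indepNumOn s := by
  classical
  exact le_sup (f := card) (mem_filter.2 ⟨mem_powerset.2 hts, ht⟩)

theorem indepNumOn_le {s : Finset V} {k : ℕ}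
    (h : ∀ t ⊆ s, G.IsIndepSet (t : Set V) → t.card ≤ k) : G.indepNumOn s ≤ k := by
  classical
  refine Finset.sup_le fun t ht => ?_
  rw [mem_filter, mem_powerset] at ht
  exact h t ht.1 ht.2

theorem exists_isIndepSet_card_eq_indepNumOn (s : Finset V) :
    ∃ t ⊆ s, G.IsIndepSet (t : Set V) ∧ t.card = G.indepNumOn s := by
  classical
  obtain ⟨t, ht, heq⟩ := exists_mem_eq_sup
    (s.powerset.filter fun t : Finset V => G.IsIndepSet (t : Set V)) ⟨∅, by simp⟩ card
  rw [mem_filter, mem_powerset] at ht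
  exact ⟨t, ht.1, ht.2, heq.symm⟩

@[simp]
theorem indepNumOn_empty : G.indepNumOn ∅ = 0 :=
  Nat.le_zero.1 <| indepNumOn_le fun t ht _ => by simp [subset_empty.1 ht]

theorem indepNumOn_mono {s t : Finset V} (hst : s ⊆ t) : G.indepNumOn s ≤ G.indepNumOn t :=
  indepNumOn_le fun _ hu hind => card_le_indepNumOn (hu.trans hst) hind

theorem indepNumOn_union_le [DecidableEq V] (s t : Finset V) :
    G.indepNumOn (s ∪ t) ≤ G.indepNumOn s + G.indepNumOn t := by
  refine indepNumOn_le fun u hu hind => ?_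
  rw [← card_filter_add_card_filter_not (s := u) (p := (· ∈ s))]
  refine add_le_add (card_le_indepNumOn (fun x hx => (mem_filter.1 hx).2)
    (hind.mono (filter_subset _ _))) (card_le_indepNumOn (fun x hx => ?_)
    (hind.mono (filter_subset _ _)))
  obtain ⟨hxu, hxs⟩ := mem_filter.1 hx
  exact (mem_union.1 (hu hxu)).resolve_left hxs

theorem indepNumOn_insert_le [DecidableEq V] (v : V) (s : Finset V) :
    G.indepNumOn (insert v s) ≤ G.indepNumOn s + 1 := by
  rw [insert_eq, add_comm]
  refine (indepNumOn_union_le _ _).trans (Nat.add_le_add_right ?_ _)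
  exact indepNumOn_le fun t ht _ => (card_le_card ht).trans (card_singleton v).le

theorem connected_induce_union_of_forall_exists_adj {B E : Set V}
    (hB : (G.induce B).Connected) (hE : ∀ x ∈ E, ∃ y ∈ B, G.Adj x y) :
    (G.induce (B ∪ E)).Connected := by
  obtain ⟨⟨u, hu⟩⟩ := hB.nonempty
  refine induce_connected_of_patches u (Or.inl hu) fun {v} hv => ?_
  rcases hv with hv | hv
  · exact ⟨B, Set.subset_union_left, hu, hv, hB.preconnected _ _⟩
  obtain ⟨y, hy, hvy⟩ := hE v hv
  have hconn : (G.induce (B ∪ {y, v})).Connected := induce_union_connected hB.preconnected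
    (induce_pair_connected_of_adj hvy.symm).preconnected ⟨y, hy, by simp⟩
  refine ⟨B ∪ {y, v}, Set.union_subset Set.subset_union_left ?_, Or.inl hu, by simp,
    hconn.preconnected _ _⟩
  exact Set.insert_subset (Or.inl hy) (Set.singleton_subset_iff.2 (Or.inr hv))

variable (G) in
def IsComponentIn (A C : Finset V) : Prop :=
  Maximal (fun s : Finset V => s ⊆ A ∧ (G.induce (s : Set V)).Connected) C

namespace IsComponentIn

variable {A C C' : Finset V}

theorem subset (hC : G.IsComponentIn A C) : C ⊆ A := hC.prop.1

theorem connected (hC : G.IsComponentIn A C) : (G.induce (C : Set V)).Connected := hC.prop.2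

theorem mem_of_adj [DecidableEq V] (hC : G.IsComponentIn A C) {u v : V} (hv : v ∈ C)
    (hu : u ∈ A) (huv : G.Adj u v) : u ∈ C := by
  have hconn : (G.induce ((C ∪ {u} : Finset V) : Set V)).Connected := by
    rw [coe_union, coe_singleton]
    exact connected_induce_union_of_forall_exists_adj hC.connected (by simpa using ⟨v, hv, huv⟩)
  exact hC.2 ⟨union_subset hC.subset (singleton_subset_iff.2 hu), hconn⟩ subset_union_left
    (mem_union_right _ (mem_singleton_self u))

theorem eq_of_mem [DecidableEq V] (hC : G.IsComponentIn A C) (hC' : G.IsComponentIn A C')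
    {v : V} (hv : v ∈ C) (hv' : v ∈ C') : C = C' := by
  have hunion : C ∪ C' ⊆ A ∧ (G.induce ((C ∪ C' : Finset V) : Set V)).Connected := by
    refine ⟨union_subset hC.subset hC'.subset, ?_⟩
    rw [coe_union]
    exact induce_union_connected hC.connected.preconnected hC'.connected.preconnected ⟨v, hv, hv'⟩
  exact le_antisymm (union_subset_left (hC'.2 hunion subset_union_right))
    (union_subset_right (hC.2 hunion subset_union_left))

end IsComponentIn

theorem exists_isComponentIn_mem [Finite V] {A : Finset V} {v : V} (hv : v ∈ A) :
    ∃ C, G.IsComponentIn A C ∧ v ∈ C := by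
  have hsingle : {v} ⊆ A ∧ (G.induce (({v} : Finset V) : Set V)).Connected := by
    refine ⟨singleton_subset_iff.2 hv, ?_⟩
    rw [coe_singleton, induce_singleton_eq_top]
    exact connected_top
  obtain ⟨C, hvC, hC⟩ := _root_.Finite.exists_le_maximal
    (p := fun s : Finset V => s ⊆ A ∧ (G.induce (s : Set V)).Connected) hsingle
  exact ⟨C, hC, singleton_subset_iff.1 hvC⟩

open scoped Classical in
variable (G) in
noncomputable def nbrsIn (C B : Finset V) : Finset V :=
  B.filter fun x => ∃ y ∈ C, G.Adj x y

theorem mem_nbrsIn {C B : Finset V} {x : V} :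
    x ∈ G.nbrsIn C B ↔ x ∈ B ∧ ∃ y ∈ C, G.Adj x y := by
  classical
  simp [nbrsIn]

theorem nbrsIn_subset (C B : Finset V) : G.nbrsIn C B ⊆ B :=
  fun _ hx => (mem_nbrsIn.1 hx).1

section Attachments

variable [DecidableEq V] {U B C : Finset V} {v : V}

theorem mem_of_mem_union_nbrsIn (hv : v ∈ C ∪ G.nbrsIn C B) (hvB : v ∉ B) : v ∈ C :=
  (mem_union.1 hv).resolve_right fun h => hvB (nbrsIn_subset _ _ h)

theorem mem_nbrsIn_of_mem_union_nbrsIn (hC : G.IsComponentIn (U \ B) C)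
    (hv : v ∈ C ∪ G.nbrsIn C B) (hvB : v ∈ B) : v ∈ G.nbrsIn C B :=
  (mem_union.1 hv).resolve_left fun h => (mem_sdiff.1 (hC.subset h)).2 hvB

theorem exists_union_nbrsIn_of_adj [Finite V] {u : V} (hu : u ∈ U) (hv : v ∈ U) (huB : u ∉ B)
    (huv : G.Adj u v) : ∃ C : {C // G.IsComponentIn (U \ B) C},
      u ∈ C.1 ∪ G.nbrsIn C.1 B ∧ v ∈ C.1 ∪ G.nbrsIn C.1 B := by
  obtain ⟨C, hC, huC⟩ := exists_isComponentIn_mem (G := G) (mem_sdiff.2 ⟨hu, huB⟩)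
  refine ⟨⟨C, hC⟩, mem_union_left _ huC, ?_⟩
  by_cases hvB : v ∈ B
  · exact mem_union_right _ (mem_nbrsIn.2 ⟨hvB, u, huC, huv.symm⟩)
  · exact mem_union_left _ (hC.mem_of_adj huC (mem_sdiff.2 ⟨hv, hvB⟩) huv.symm)

end Attachments

variable (G) in
/-- `exists_top` is connectivity of traces in rooted form: the nodes whose bag contains `v` are
closed under `parent`, except at a single topmost node `m`. -/
structure RootedTreeDecomp (U : Finset V) where
  ι : Type u
  root : ι
  parent : ι → ι
  depth : ι → ℕ
  depth_parent_lt : ∀ t, t ≠ root → depth (parent t) < depth t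
  bag : ι → Finset V
  bag_subset : ∀ t, bag t ⊆ U
  exists_bag_of_adj : ∀ u ∈ U, ∀ v ∈ U, G.Adj u v → ∃ t, u ∈ bag t ∧ v ∈ bag t
  exists_top : ∀ v ∈ U, ∃ m, v ∈ bag m ∧ ∀ t, v ∈ bag t → t ≠ m → t ≠ root ∧ v ∈ bag (parent t)

namespace RootedTreeDecomp

variable {U : Finset V} (D : G.RootedTreeDecomp U)

def single (U : Finset V) : G.RootedTreeDecomp U where
  ι := PUnit
  root := PUnit.unit
  parent := id
  depth _ := 0
  depth_parent_lt _ ht := absurd rfl ht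
  bag _ := U
  bag_subset _ := subset_rfl
  exists_bag_of_adj _ hu _ hv _ := ⟨PUnit.unit, hu, hv⟩
  exists_top _ hv := ⟨PUnit.unit, hv, fun _ _ ht => absurd rfl ht⟩

def treeGraph : SimpleGraph D.ι :=
  fromRel fun s t => s ≠ D.root ∧ D.parent s = t

theorem treeGraph_adj_parent {t : D.ι} (ht : t ≠ D.root) : D.treeGraph.Adj t (D.parent t) :=
  ⟨fun h => (D.depth_parent_lt t ht).ne (congrArg D.depth h).symm, Or.inl ⟨ht, rfl⟩⟩

theorem reachable_induce_of_closed {S : Set D.ι} {m : D.ι} (hm : m ∈ S)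
    (hS : ∀ t ∈ S, t ≠ m → t ≠ D.root ∧ D.parent t ∈ S) (t : D.ι) (ht : t ∈ S) :
    (D.treeGraph.induce S).Reachable ⟨t, ht⟩ ⟨m, hm⟩ := by
  by_cases htm : t = m
  · subst htm
    rfl
  obtain ⟨hroot, hpar⟩ := hS t ht htm
  have hadj : (D.treeGraph.induce S).Adj ⟨t, ht⟩ ⟨D.parent t, hpar⟩ :=
    D.treeGraph_adj_parent hroot
  exact hadj.reachable.trans (reachable_induce_of_closed hm hS _ hpar)
termination_by D.depth t
decreasing_by exact D.depth_parent_lt t hroot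

theorem connected_induce_of_closed {S : Set D.ι} {m : D.ι} (hm : m ∈ S)
    (hS : ∀ t ∈ S, t ≠ m → t ≠ D.root ∧ D.parent t ∈ S) : (D.treeGraph.induce S).Connected :=
  have : Nonempty S := ⟨⟨m, hm⟩⟩
  ⟨fun ⟨a, ha⟩ ⟨b, hb⟩ => (D.reachable_induce_of_closed hm hS a ha).trans
    (D.reachable_induce_of_closed hm hS b hb).symm⟩

theorem treeGraph_connected : D.treeGraph.Connected := by
  have : Nonempty D.ι := ⟨D.root⟩
  refine ⟨fun a b => ?_⟩
  have hreach := fun t => (D.reachable_induce_of_closed (S := Set.univ) (Set.mem_univ D.root)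
    (fun t _ ht => ⟨ht, Set.mem_univ _⟩) t (Set.mem_univ t)).map (Embedding.induce _).toHom
  exact (hreach a).trans (hreach b).symm

theorem treeGraph_isAcyclic : D.treeGraph.IsAcyclic := by
  intro v c hc
  classical
  obtain ⟨m, hm, hmax⟩ := c.support.toFinset.exists_max_image D.depth ⟨v, by simp⟩
  rw [List.mem_toFinset] at hm
  have hc' : (c.rotate m hm).IsCycle := hc.rotate hm
  -- `m` has maximal depth on the cycle, so both of its neighbours on it are `parent m`
  have hpar : ∀ z ∈ (c.rotate m hm).support, D.treeGraph.Adj m z → z = D.parent m := by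
    intro z hz hmz
    rcases hmz.2 with ⟨_, h⟩ | ⟨hzr, h⟩
    · exact h.symm
    · have := hmax z (List.mem_toFinset.2 ((c.mem_support_rotate_iff m hm).1 hz))
      exact absurd (h ▸ D.depth_parent_lt z hzr) (not_lt.2 this)
  exact hc'.snd_ne_penultimate <|
    (hpar _ (Walk.getVert_mem_support _ _) (Walk.adj_snd hc'.not_nil)).trans
    (hpar _ (Walk.getVert_mem_support _ _) (Walk.adj_penultimate hc'.not_nil).symm).symm

theorem treeGraph_isTree : D.treeGraph.IsTree :=
  ⟨D.treeGraph_connected, D.treeGraph_isAcyclic⟩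

open scoped Classical in
noncomputable def glue {B : Finset V} (hBU : B ⊆ U) {κ : Type u} (U' : κ → Finset V)
    (D' : ∀ k, G.RootedTreeDecomp (U' k)) (hU' : ∀ k, U' k ⊆ U)
    (hroot : ∀ k, ∀ v ∈ U' k, v ∈ B → v ∈ (D' k).bag (D' k).root)
    (hunique : ∀ k k', ∀ v ∈ U' k, v ∈ U' k' → v ∉ B → k = k')
    (hcover : ∀ v ∈ U, v ∉ B → ∃ k, v ∈ U' k)
    (hadj : ∀ u ∈ U, ∀ v ∈ U, G.Adj u v → u ∈ B ∧ v ∈ B ∨ ∃ k, u ∈ U' k ∧ v ∈ U' k) :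
    G.RootedTreeDecomp U where
  ι := Option (Σ k, (D' k).ι)
  root := none
  parent t := t.bind fun p =>
    if p.2 = (D' p.1).root then none else some ⟨p.1, (D' p.1).parent p.2⟩
  depth t := t.elim 0 fun p => (D' p.1).depth p.2 + 1
  depth_parent_lt := by
    rintro (_ | ⟨k, a⟩) ht
    · exact absurd rfl ht
    by_cases ha : a = (D' k).root
    · simp [ha]
    · simpa [ha] using (D' k).depth_parent_lt a ha
  bag t := t.elim B fun p => (D' p.1).bag p.2
  bag_subset := by
    rintro (_ | ⟨k, a⟩)
    exacts [hBU, ((D' k).bag_subset a).trans (hU' k)]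
  exists_bag_of_adj u hu v hv huv := by
    rcases hadj u hu v hv huv with ⟨huB, hvB⟩ | ⟨k, huk, hvk⟩
    · exact ⟨none, huB, hvB⟩
    · obtain ⟨a, ha⟩ := (D' k).exists_bag_of_adj u huk v hvk huv
      exact ⟨some ⟨k, a⟩, ha⟩
  exists_top v hv := by
    by_cases hvB : v ∈ B
    · refine ⟨none, hvB, ?_⟩
      rintro (_ | ⟨k, a⟩) hva ht
      · exact absurd rfl ht
      refine ⟨Option.some_ne_none _, ?_⟩
      by_cases ha : a = (D' k).root
      · simpa [ha] using hvB
      obtain ⟨m, -, hm⟩ := (D' k).exists_top v ((D' k).bag_subset a hva)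
      have hvroot := hroot k v ((D' k).bag_subset a hva) hvB
      have hmroot : m = (D' k).root := by
        by_contra hne
        exact (hm _ hvroot (Ne.symm hne)).1 rfl
      simpa [ha] using (hm a hva (hmroot ▸ ha)).2
    · obtain ⟨k, hvk⟩ := hcover v hv hvB
      obtain ⟨m, hvm, hm⟩ := (D' k).exists_top v hvk
      refine ⟨some ⟨k, m⟩, hvm, ?_⟩
      rintro (_ | ⟨k', a⟩) hva ht
      · exact absurd hva hvB
      obtain rfl := hunique _ _ v ((D' k').bag_subset a hva) hvk hvB
      obtain ⟨ha, hvpa⟩ := hm a hva fun h => ht (h ▸ rfl)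
      exact ⟨Option.some_ne_none _, by simpa [ha] using hvpa⟩

noncomputable def ofComponents [Finite V] [DecidableEq V] {B : Finset V} (hBU : B ⊆ U)
    (D' : ∀ C : {C // G.IsComponentIn (U \ B) C}, G.RootedTreeDecomp (C.1 ∪ G.nbrsIn C.1 B))
    (hroot : ∀ C, G.nbrsIn C.1 B ⊆ (D' C).bag (D' C).root) : G.RootedTreeDecomp U :=
  glue hBU (κ := {C // G.IsComponentIn (U \ B) C}) (fun C => C.1 ∪ G.nbrsIn C.1 B) D'
    (fun C => union_subset (C.2.subset.trans sdiff_subset) ((nbrsIn_subset _ _).trans hBU))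
    (fun C _ hv hvB => hroot C (mem_nbrsIn_of_mem_union_nbrsIn C.2 hv hvB))
    (fun C C' _ hv hv' hvB => Subtype.ext
      (C.2.eq_of_mem C'.2 (mem_of_mem_union_nbrsIn hv hvB) (mem_of_mem_union_nbrsIn hv' hvB)))
    (fun v hv hvB => by
      obtain ⟨C, hC, hvC⟩ := exists_isComponentIn_mem (G := G) (mem_sdiff.2 ⟨hv, hvB⟩)
      exact ⟨⟨C, hC⟩, mem_union_left _ hvC⟩)
    (fun u hu v hv huv => by
      by_cases huB : u ∈ B
      · by_cases hvB : v ∈ B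
        · exact Or.inl ⟨huB, hvB⟩
        · obtain ⟨C, hvC, huC⟩ := exists_union_nbrsIn_of_adj hv hu hvB huv.symm
          exact Or.inr ⟨C, huC, hvC⟩
      · exact Or.inr (exists_union_nbrsIn_of_adj hu hv huB huv))

end RootedTreeDecomp

variable (G) in
def HasBalancedSeparators [Fintype V] (c : ℝ) (d : ℕ) : Prop :=
  ∀ w : V → ℝ, (∀ v, 0 ≤ w v) → (∀ v, w v ≤ 1) → ∑ v, w v = 1 →
    ∃ X : Set V, (∀ S : Finset V, (S : Set V) ⊆ X → G.IsIndepSet (S : Set V) → S.card ≤ d) ∧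
      ∀ D : Finset V, (D : Set V) ⊆ Xᶜ → (G.induce (D : Set V)).Connected → ∑ v ∈ D, w v ≤ c

variable [DecidableEq V]

variable (G) in
def IsBalancedSeparatorFor (c : ℝ) (d : ℕ) (I X : Finset V) : Prop :=
  G.indepNumOn X ≤ d ∧ ∀ D : Finset V, Disjoint D X → (G.induce (D : Set V)).Connected →
    ((D ∩ I).card : ℝ) ≤ c * I.card

variable {c : ℝ} {d : ℕ}

theorem HasBalancedSeparators.exists_isBalancedSeparatorFor [Fintype V]
    (hsep : G.HasBalancedSeparators c d) {I : Finset V} (hI : I.Nonempty) :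
    ∃ X, G.IsBalancedSeparatorFor c d I X := by
  classical
  have hIpos : (0 : ℝ) < I.card := by exact_mod_cast hI.card_pos
  set w : V → ℝ := fun v => if v ∈ I then (I.card : ℝ)⁻¹ else 0
  have hw : ∀ D : Finset V, ∑ v ∈ D, w v = (D ∩ I).card / I.card := by
    intro D
    simp [w, sum_ite_mem, div_eq_mul_inv]
  have hw₁ : ∀ v, w v ≤ 1 := fun v => by
    by_cases hv : v ∈ I
    · simpa [w, hv] using inv_le_one_of_one_le₀ (Nat.one_le_cast.2 hI.card_pos : (1 : ℝ) ≤ I.card)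
    · simp [w, hv]
  obtain ⟨X, hXd, hXbal⟩ := hsep w (fun v => by positivity) hw₁
    (by rw [hw, univ_inter, div_self hIpos.ne'])
  refine ⟨X.toFinset, indepNumOn_le fun t ht hind => hXd t (by simpa using ht) hind,
    fun D hDX hD => ?_⟩
  have := hXbal D (fun v hv hvX => Finset.disjoint_left.1 hDX hv (Set.mem_toFinset.2 hvX)) hD
  rwa [hw, div_le_iff₀ hIpos] at this

namespace IsBalancedSeparatorFor

variable {I X W C J : Finset V}

theorem card_inter_le (hX : G.IsBalancedSeparatorFor c d I X) {S : Finset V}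
    (hS : G.IsIndepSet (S : Set V)) : ((S ∩ X).card : ℝ) ≤ d := by
  exact_mod_cast (card_le_indepNumOn inter_subset_right (hS.mono inter_subset_left)).trans hX.1

theorem exists_forall_not_adj (hX : G.IsBalancedSeparatorFor c d I X)
    (hI : G.IsIndepSet (I : Set V)) (hlt : d + c * I.card < I.card)
    (hC : (G.induce (C : Set V)).Connected) (hCX : Disjoint C X) :
    ∃ i ∈ I, ∀ y ∈ C, ¬ G.Adj i y := by
  by_contra! hadj
  have hbal : (((C ∪ I \ X) ∩ I).card : ℝ) ≤ c * I.card := by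
    refine hX.2 _ (disjoint_union_left.2 ⟨hCX, sdiff_disjoint⟩) ?_
    rw [coe_union]
    exact connected_induce_union_of_forall_exists_adj hC fun i hi => hadj i (mem_sdiff.1 hi).1
  have hcover : (I.card : ℝ) ≤ (I ∩ X).card + ((C ∪ I \ X) ∩ I).card := by
    rw [← card_inter_add_card_sdiff I X]
    exact_mod_cast Nat.add_le_add_left (card_le_card fun i hi =>
      mem_inter.2 ⟨mem_union_right _ hi, (mem_sdiff.1 hi).1⟩) _
  linarith [hX.card_inter_le hI]

theorem card_le_of_forall_exists_adj (hX : G.IsBalancedSeparatorFor c d I X) (hIW : I ⊆ W)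
    (hI : G.IsIndepSet (I : Set V)) (hImax : G.indepNumOn W ≤ I.card)
    (hC : (G.induce (C : Set V)).Connected) (hCX : Disjoint C X) (hJW : J ⊆ W)
    (hJX : Disjoint J X) (hJ : G.IsIndepSet (J : Set V)) (hJC : ∀ j ∈ J, ∃ y ∈ C, G.Adj j y) :
    (J.card : ℝ) ≤ d + c * I.card := by
  classical
  set N := (I \ X).filter fun i => ∃ j ∈ J, G.Adj i j
  set R := (I \ X).filter fun i => i ∉ J ∧ ∀ j ∈ J, ¬ G.Adj i j
  have hbal : (((C ∪ J ∪ N) ∩ I).card : ℝ) ≤ c * I.card := by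
    refine hX.2 _ (disjoint_union_left.2 ⟨disjoint_union_left.2 ⟨hCX, hJX⟩,
      (sdiff_disjoint.mono_left (filter_subset _ _))⟩) ?_
    rw [coe_union, coe_union]
    refine connected_induce_union_of_forall_exists_adj
      (connected_induce_union_of_forall_exists_adj hC hJC) fun i hi => ?_
    obtain ⟨j, hj, hij⟩ := (mem_filter.1 hi).2
    exact ⟨j, Or.inr hj, hij⟩
  have hJR : (J.card : ℝ) + R.card ≤ I.card := by
    have hRI : R ⊆ I := (filter_subset _ _).trans sdiff_subset
    have hind : G.IsIndepSet ((J ∪ R : Finset V) : Set V) := by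
      rw [coe_union, IsIndepSet, Set.pairwise_union]
      refine ⟨hJ, hI.mono hRI, fun j hj r hr _ => ?_⟩
      have hrj := (mem_filter.1 hr).2.2 j hj
      exact ⟨fun h => hrj h.symm, hrj⟩
    rw [← Nat.cast_add,
      ← card_union_of_disjoint (disjoint_right.2 fun r hr => (mem_filter.1 hr).2.1)]
    exact_mod_cast (card_le_indepNumOn (union_subset hJW (hRI.trans hIW)) hind).trans hImax
  have hcover : I ⊆ I ∩ X ∪ (C ∪ J ∪ N) ∩ I ∪ R := by
    intro i hi
    by_cases hiX : i ∈ X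
    · simp [hi, hiX]
    by_cases hiJ : i ∈ J
    · simp [hi, hiJ]
    by_cases hiN : ∃ j ∈ J, G.Adj i j
    · simp [N, hi, hiX, hiN]
    · push Not at hiN
      exact mem_union_right _ (mem_filter.2 ⟨mem_sdiff.2 ⟨hi, hiX⟩, hiJ, hiN⟩)
  have hcard : (I.card : ℝ) ≤ (I ∩ X).card + ((C ∪ J ∪ N) ∩ I).card + R.card := by
    exact_mod_cast (card_le_card hcover).trans
      ((card_union_le _ _).trans (Nat.add_le_add_right (card_union_le _ _) _))
  linarith [hX.card_inter_le hI]

theorem indepNumOn_nbrsIn_le (hX : G.IsBalancedSeparatorFor c d I X) (hIW : I ⊆ W)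
    (hI : G.IsIndepSet (I : Set V)) (hImax : G.indepNumOn W ≤ I.card)
    (hC : (G.induce (C : Set V)).Connected) (hCX : Disjoint C X) {B : Finset V}
    (hB : B ⊆ W ∪ X) : (G.indepNumOn (G.nbrsIn C B) : ℝ) ≤ 2 * d + c * I.card := by
  obtain ⟨S, hS, hSind, hcard⟩ := exists_isIndepSet_card_eq_indepNumOn (G := G) (G.nbrsIn C B)
  have hSW : S \ X ⊆ W := fun v hv =>
    (mem_union.1 (hB (mem_nbrsIn.1 (hS (mem_sdiff.1 hv).1)).1)).resolve_right (mem_sdiff.1 hv).2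
  have hSJ := hX.card_le_of_forall_exists_adj hIW hI hImax hC hCX hSW sdiff_disjoint
    (hSind.mono sdiff_subset) fun v hv => (mem_nbrsIn.1 (hS (mem_sdiff.1 hv).1)).2
  rw [← hcard, ← card_inter_add_card_sdiff S X]
  push_cast
  linarith [hX.card_inter_le hSind]

theorem card_union_nbrsIn_lt (hX : G.IsBalancedSeparatorFor c d I X)
    (hI : G.IsIndepSet (I : Set V)) (hlt : d + c * I.card < I.card) {U B : Finset V}
    (hIB : I ⊆ B) (hBU : B ⊆ U) (hC : G.IsComponentIn (U \ B) C) (hCX : Disjoint C X) :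
    (C ∪ G.nbrsIn C B).card < U.card := by
  obtain ⟨i, hiI, hiC⟩ := hX.exists_forall_not_adj hI hlt hC.connected hCX
  refine card_lt_card ((ssubset_iff_of_subset (union_subset (hC.subset.trans sdiff_subset)
    ((nbrsIn_subset _ _).trans hBU))).2 ⟨i, hBU (hIB hiI), fun hi => ?_⟩)
  rcases mem_union.1 hi with hiC' | hiN
  · exact (mem_sdiff.1 (hC.subset hiC')).2 (hIB hiI)
  · obtain ⟨-, y, hy, hiy⟩ := mem_nbrsIn.1 hiN
    exact hiC y hy hiy

end IsBalancedSeparatorFor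

theorem indepNumOn_insert_le_of_le (hc₀ : 0 ≤ c) (hc₁ : c < 1) (hd : 0 < d) {W : Finset V}
    (hW : (G.indepNumOn W : ℝ) ≤ d / (1 - c)) (u : V) :
    (G.indepNumOn (insert u W) : ℝ) ≤ 2 * d / (1 - c) := by
  have hone : (1 : ℝ) ≤ d / (1 - c) := by
    rw [le_div_iff₀ (sub_pos.2 hc₁)]
    linarith [(Nat.one_le_cast.2 hd : (1 : ℝ) ≤ d)]
  have hins : (G.indepNumOn (insert u W) : ℝ) ≤ G.indepNumOn W + 1 := by
    exact_mod_cast indepNumOn_insert_le u W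
  linarith [mul_div_assoc 2 (d : ℝ) (1 - c)]

theorem HasBalancedSeparators.exists_separating_bag [Fintype V]
    (hsep : G.HasBalancedSeparators c d) (hc₀ : 0 ≤ c) (hc₁ : c < 1) {U W : Finset V}
    (hWU : W ⊆ U) (hW : (G.indepNumOn W : ℝ) ≤ 2 * d / (1 - c))
    (hW' : d / (1 - c) < (G.indepNumOn W : ℝ)) :
    ∃ B, W ⊆ B ∧ B ⊆ U ∧ (G.indepNumOn B : ℝ) ≤ 2 * d / (1 - c) + d ∧
      ∀ C, G.IsComponentIn (U \ B) C → (C ∪ G.nbrsIn C B).card < U.card ∧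
        (G.indepNumOn (G.nbrsIn C B) : ℝ) ≤ 2 * d / (1 - c) := by
  have hc : 0 < 1 - c := sub_pos.2 hc₁
  obtain ⟨I, hIW, hI, hIcard⟩ := exists_isIndepSet_card_eq_indepNumOn (G := G) W
  rw [← hIcard] at hW hW'
  have hlt : d + c * I.card < I.card := by
    rw [div_lt_iff₀ hc] at hW'
    linarith
  have hIne : I.Nonempty := by
    rw [← card_pos, ← Nat.cast_pos (α := ℝ)]
    nlinarith
  obtain ⟨X, hX⟩ := hsep.exists_isBalancedSeparatorFor hIne
  have hBX : W ∪ U ∩ X ⊆ W ∪ X := union_subset_union_right inter_subset_right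
  have hB : G.indepNumOn (W ∪ U ∩ X) ≤ I.card + d := (indepNumOn_union_le _ _).trans
    (add_le_add hIcard.ge ((indepNumOn_mono inter_subset_right).trans hX.1))
  refine ⟨W ∪ U ∩ X, subset_union_left, union_subset hWU inter_subset_left, ?_, fun C hC => ?_⟩
  · have hB' : (G.indepNumOn (W ∪ U ∩ X) : ℝ) ≤ I.card + d := by exact_mod_cast hB
    linarith
  have hCX : Disjoint C X := Finset.disjoint_left.2 fun v hvC hvX =>
    have hv := mem_sdiff.1 (hC.subset hvC)
    hv.2 (mem_union_right _ (mem_inter.2 ⟨hv.1, hvX⟩))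
  refine ⟨hX.card_union_nbrsIn_lt hI hlt (hIW.trans subset_union_left)
    (union_subset hWU inter_subset_left) hC hCX, ?_⟩
  have hnbrs := hX.indepNumOn_nbrsIn_le hIW hI hIcard.ge hC.connected hCX hBX
  have hfix : 2 * d + c * (2 * d / (1 - c)) = 2 * d / (1 - c) := by
    field_simp
    ring
  nlinarith [mul_le_mul_of_nonneg_left hW hc₀]

theorem exists_rootedTreeDecomp_of_hasBalancedSeparators [Fintype V]
    (hsep : G.HasBalancedSeparators c d) (hc₀ : 0 ≤ c) (hc₁ : c < 1) (hd : 0 < d)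
    (U W : Finset V) (hWU : W ⊆ U) (hW : (G.indepNumOn W : ℝ) ≤ 2 * d / (1 - c)) :
    ∃ D : G.RootedTreeDecomp U, W ⊆ D.bag D.root ∧
      ∀ t, (G.indepNumOn (D.bag t) : ℝ) ≤ 2 * d / (1 - c) + d := by
  by_cases hUW : U ⊆ W
  · refine ⟨.single U, hWU, fun _ => ?_⟩
    have hU : (G.indepNumOn U : ℝ) ≤ G.indepNumOn W := by exact_mod_cast indepNumOn_mono hUW
    exact hU.trans (hW.trans (le_add_of_nonneg_right d.cast_nonneg))
  obtain ⟨u, huU, huW⟩ := not_subset.1 hUW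
  by_cases hsmall : (G.indepNumOn W : ℝ) ≤ d / (1 - c)
  · obtain ⟨D, hroot, hbags⟩ := exists_rootedTreeDecomp_of_hasBalancedSeparators hsep hc₀ hc₁ hd
      U (insert u W) (insert_subset huU hWU) (indepNumOn_insert_le_of_le hc₀ hc₁ hd hsmall u)
    exact ⟨D, (subset_insert u W).trans hroot, hbags⟩
  obtain ⟨B, hWB, hBU, hB, hcomp⟩ := hsep.exists_separating_bag hc₀ hc₁ hWU hW (not_le.1 hsmall)
  have hchild : ∀ C : {C // G.IsComponentIn (U \ B) C},
      ∃ D : G.RootedTreeDecomp (C.1 ∪ G.nbrsIn C.1 B), G.nbrsIn C.1 B ⊆ D.bag D.root ∧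
        ∀ t, (G.indepNumOn (D.bag t) : ℝ) ≤ 2 * d / (1 - c) + d := fun C =>
    exists_rootedTreeDecomp_of_hasBalancedSeparators hsep hc₀ hc₁ hd _ _ subset_union_right
      (hcomp C.1 C.2).2
  choose D hDroot hDbags using hchild
  refine ⟨.ofComponents hBU D hDroot, hWB, ?_⟩
  rintro (_ | ⟨C, a⟩)
  exacts [hB, hDbags C a]
termination_by (U.card, (U \ W).card)
decreasing_by
  · exact Prod.Lex.right _ (sdiff_insert U W u ▸ card_erase_lt_of_mem (mem_sdiff.2 ⟨huU, huW⟩))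
  · exact Prod.Lex.left _ _ (hcomp C.1 C.2).1

end SimpleGraph

open SimpleGraph in
/-- If for every normal weight function `w` on `G` there is a set `X_w` of
independence number at most `d` whose removal leaves all components of `w`-weight at most
`c` (with `1/2 ≤ c < 1`), then `G` has a tree decomposition all of whose bags have
independence number at most `((3-c)/(1-c))·d`. -/
theorem stmt_19 {V : Type} [Fintype V] (G : SimpleGraph V) (c : ℝ)
    (hc1 : 1 / 2 ≤ c) (hc2 : c < 1) (d : ℕ) (hd : 0 < d)
    (hsep : ∀ w : V → ℝ, (∀ v, 0 ≤ w v) → (∀ v, w v ≤ 1) → (∑ v, w v) = 1 →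
      ∃ X : Set V,
        (∀ S : Finset V, (S : Set V) ⊆ X →
          (∀ u ∈ S, ∀ v ∈ S, u ≠ v → ¬ G.Adj u v) → S.card ≤ d) ∧
        ∀ D : Finset V, (D : Set V) ⊆ Xᶜ → (G.induce (D : Set V)).Connected →
          (∑ v ∈ D, w v) ≤ c) :
    ∃ (ι : Type) (T : SimpleGraph ι) (χ : ι → Set V),
      T.IsTree ∧
      (∀ u v : V, G.Adj u v → ∃ t, u ∈ χ t ∧ v ∈ χ t) ∧
      (∀ v : V, ({t : ι | v ∈ χ t}).Nonempty ∧ (T.induce {t : ι | v ∈ χ t}).Connected) ∧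
      (∀ t : ι, ∀ S : Finset V, (S : Set V) ⊆ χ t →
        (∀ u ∈ S, ∀ v ∈ S, u ≠ v → ¬ G.Adj u v) →
        (S.card : ℝ) ≤ ((3 - c) / (1 - c)) * d) := by
  classical
  obtain ⟨D, -, hbags⟩ := exists_rootedTreeDecomp_of_hasBalancedSeparators (G := G) hsep
    (by linarith) hc2 hd univ ∅ (empty_subset _) (by simp; positivity)
  refine ⟨D.ι, D.treeGraph, fun t => D.bag t, D.treeGraph_isTree,
    fun u v huv => D.exists_bag_of_adj u (mem_univ u) v (mem_univ v) huv, fun v => ?_,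
    fun t S hS hind => ?_⟩
  · obtain ⟨m, hvm, hm⟩ := D.exists_top v (mem_univ v)
    exact ⟨⟨m, hvm⟩, D.connected_induce_of_closed hvm hm⟩
  · have hcard : (S.card : ℝ) ≤ G.indepNumOn (D.bag t) := by
      exact_mod_cast card_le_indepNumOn (coe_subset.1 hS) fun u hu v hv => hind u hu v hv
    have hbound : (3 - c) / (1 - c) * d = 2 * d / (1 - c) + d := by
      field_simp [(sub_pos.2 hc2).ne']
      ring
    linarith [hbags t]
end
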